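/- arXiv:1811.02772 — 8 statements merged into one kernel-verified Lean document; each statement's English description precedes it below -/
import Mathlib

section
/- Let X and Y be real normed linear spaces of dimension at least 2, and let T be a bounded linear operator from X to Y whose norm attainment set is M_T = {x₀, −x₀} for some x₀ ∈ X with ‖x₀‖ = 1. Suppose P is an L-projection on X whose range is span{x₀}, and suppose that the restriction of T to ker(P) has norm strictly less than ‖T‖. Then every norming sequence {x_n} for T has a subsequence converging to a·x₀ for some real a with |a| = 1. -/
/-!
Write `z = P z + (z - P z)` with `z - P z ∈ ker P`. Since `P` is an L-projection,
`‖T z‖ ≤ ‖T‖ ‖P z‖ + ‖T|_{ker P}‖ ‖z - P z‖ = ‖T‖ ‖z‖ - (‖T‖ - ‖T|_{ker P}‖) ‖z - P z‖`,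
so along a norming sequence of unit vectors the kernel components tend to `0` and
`‖P xₙ‖ → 1`. The components `P xₙ = aₙ • x₀` have `|aₙ| → 1`, and a convergent
subsequence of the scalars `aₙ` gives the claim.
-/

open Filter Topology

namespace ContinuousLinearMap

variable {X Y : Type*} [NormedAddCommGroup X] [NormedSpace ℝ X]
  [NormedAddCommGroup Y] [NormedSpace ℝ Y]

theorem norm_apply_add_le_of_mem (T : X →L[ℝ] Y) (K : Submodule ℝ X) (u : X) {w : X}
    (hw : w ∈ K) : ‖T (u + w)‖ ≤ ‖T‖ * ‖u‖ + ‖T.comp K.subtypeL‖ * ‖w‖ :=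
  calc ‖T (u + w)‖ ≤ ‖T u‖ + ‖T.comp K.subtypeL ⟨w, hw⟩‖ := by
        rw [map_add]
        exact norm_add_le _ _
    _ ≤ ‖T‖ * ‖u‖ + ‖T.comp K.subtypeL‖ * ‖w‖ :=
        add_le_add (T.le_opNorm u) ((T.comp K.subtypeL).le_opNorm _)

theorem norm_apply_add_mul_norm_sub_le_of_Lprojection {P : X →L[ℝ] X}
    (hPidem : ∀ z, P (P z) = P z) (hPL : ∀ z, ‖z‖ = ‖P z‖ + ‖z - P z‖) (T : X →L[ℝ] Y)
    (z : X) :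
    ‖T z‖ + (‖T‖ - ‖T.comp (LinearMap.ker (P : X →ₗ[ℝ] X)).subtypeL‖) * ‖z - P z‖ ≤
      ‖T‖ * ‖z‖ := by
  have hker : z - P z ∈ LinearMap.ker (P : X →ₗ[ℝ] X) := by
    simp [LinearMap.mem_ker, hPidem]
  have h := T.norm_apply_add_le_of_mem _ (P z) hker
  rw [add_sub_cancel] at h
  rw [hPL z]
  linarith

theorem tendsto_sub_apply_nhds_zero_of_norming {P : X →L[ℝ] X}
    (hPidem : ∀ z, P (P z) = P z) (hPL : ∀ z, ‖z‖ = ‖P z‖ + ‖z - P z‖) {T : X →L[ℝ] Y}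
    (hker : ‖T.comp (LinearMap.ker (P : X →ₗ[ℝ] X)).subtypeL‖ < ‖T‖)
    {x : ℕ → X} (hx : ∀ n, ‖x n‖ = 1)
    (hnorming : Tendsto (fun n => ‖T (x n)‖) atTop (𝓝 ‖T‖)) :
    Tendsto (fun n => x n - P (x n)) atTop (𝓝 0) := by
  set δ := ‖T‖ - ‖T.comp (LinearMap.ker (P : X →ₗ[ℝ] X)).subtypeL‖
  have hδ : 0 < δ := sub_pos.mpr hker
  have hle : ∀ n, ‖x n - P (x n)‖ ≤ (‖T‖ - ‖T (x n)‖) / δ := fun n => by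
    rw [le_div_iff₀ hδ]
    have := norm_apply_add_mul_norm_sub_le_of_Lprojection hPidem hPL T (x n)
    rw [hx n] at this
    linarith
  have hgap : Tendsto (fun n => (‖T‖ - ‖T (x n)‖) / δ) atTop (𝓝 0) := by
    simpa using ((tendsto_const_nhds (x := ‖T‖)).sub hnorming).div_const δ
  exact tendsto_zero_iff_norm_tendsto_zero.mpr
    (squeeze_zero (fun _ => norm_nonneg _) hle hgap)

end ContinuousLinearMap

theorem Real.exists_subseq_tendsto_of_tendsto_abs_one {c : ℕ → ℝ}
    (hc : Tendsto (fun n => |c n|) atTop (𝓝 1)) :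
    ∃ (a : ℝ) (φ : ℕ → ℕ), |a| = 1 ∧ StrictMono φ ∧ Tendsto (c ∘ φ) atTop (𝓝 a) := by
  obtain ⟨R, hR⟩ := hc.bddAbove_range
  have hball : ∀ n, c n ∈ Metric.closedBall 0 R := fun n => by
    rw [mem_closedBall_zero_iff, Real.norm_eq_abs]
    exact hR ⟨n, rfl⟩
  obtain ⟨a, -, φ, hφ, hlim⟩ := tendsto_subseq_of_bounded Metric.isBounded_closedBall hball
  exact ⟨a, φ, tendsto_nhds_unique hlim.abs (hc.comp hφ.tendsto_atTop), hφ, hlim⟩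

theorem exists_subseq_tendsto_smul_of_mem_span_singleton {X : Type*} [NormedAddCommGroup X]
    [NormedSpace ℝ X] {x₀ : X} (hx₀ : ‖x₀‖ = 1) {u : ℕ → X}
    (hu : ∀ n, u n ∈ Submodule.span ℝ ({x₀} : Set X))
    (hnorm : Tendsto (fun n => ‖u n‖) atTop (𝓝 1)) :
    ∃ (a : ℝ) (φ : ℕ → ℕ), |a| = 1 ∧ StrictMono φ ∧
      Tendsto (u ∘ φ) atTop (𝓝 (a • x₀)) := by
  choose c hc using fun n => Submodule.mem_span_singleton.mp (hu n)
  have hcu : u = fun n => c n • x₀ := funext fun n => (hc n).symm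
  have habs : Tendsto (fun n => |c n|) atTop (𝓝 1) := by
    simpa [hcu, norm_smul, hx₀] using hnorm
  obtain ⟨a, φ, ha, hφ, hlim⟩ := Real.exists_subseq_tendsto_of_tendsto_abs_one habs
  exact ⟨a, φ, ha, hφ, hcu ▸ hlim.smul_const x₀⟩

theorem norming_sequence_subsequence_converges_general
    {X Y : Type*} [NormedAddCommGroup X] [NormedSpace ℝ X]
    [NormedAddCommGroup Y] [NormedSpace ℝ Y]
    (T : X →L[ℝ] Y) (x₀ : X) (hx₀ : ‖x₀‖ = 1)
    (P : X →L[ℝ] X)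
    (hPidem : ∀ z : X, P (P z) = P z)
    (hPL : ∀ z : X, ‖z‖ = ‖P z‖ + ‖z - P z‖)
    (hPrange : LinearMap.range (P : X →ₗ[ℝ] X) = Submodule.span ℝ ({x₀} : Set X))
    (hker : ‖T.comp (LinearMap.ker (P : X →ₗ[ℝ] X)).subtypeL‖ < ‖T‖)
    (x : ℕ → X) (hx : ∀ n, ‖x n‖ = 1)
    (hnorming : Filter.Tendsto (fun n => ‖T (x n)‖) Filter.atTop (nhds ‖T‖)) :
    ∃ (a : ℝ) (φ : ℕ → ℕ), |a| = 1 ∧ StrictMono φ ∧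
      Filter.Tendsto (fun n => x (φ n)) Filter.atTop (nhds (a • x₀)) := by
  have hw := ContinuousLinearMap.tendsto_sub_apply_nhds_zero_of_norming hPidem hPL hker hx hnorming
  have hPx : ∀ n, P (x n) ∈ Submodule.span ℝ ({x₀} : Set X) := fun n => by
    rw [← hPrange]
    exact LinearMap.mem_range_self _ (x n)
  have hPnorm : Tendsto (fun n => ‖P (x n)‖) atTop (𝓝 1) := by
    have heq : ∀ n, ‖P (x n)‖ = 1 - ‖x n - P (x n)‖ := fun n => by
      linarith [hPL (x n), hx n]
    simpa [heq] using tendsto_const_nhds.sub hw.norm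
  obtain ⟨a, φ, ha, hφ, hlim⟩ := exists_subseq_tendsto_smul_of_mem_span_singleton hx₀ hPx hPnorm
  refine ⟨a, φ, ha, hφ, ?_⟩
  simpa using hlim.add (hw.comp hφ.tendsto_atTop)

/-- **Norming-sequence claim in Theorem 6.** Let `X, Y` be real normed spaces of
dimension ≥ 2, `T : X → Y` bounded linear with norm attainment set `{x₀, -x₀}`
(`‖x₀‖ = 1`), let `P` be an L-projection on `X` with range `span{x₀}` and suppose
`‖T|_{ker P}‖ < ‖T‖`. Then every norming sequence for `T` has a subsequence
converging to `a • x₀` for some `a` with `|a| = 1`. -/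
theorem norming_sequence_subsequence_converges
    {X Y : Type*} [NormedAddCommGroup X] [NormedSpace ℝ X]
    [NormedAddCommGroup Y] [NormedSpace ℝ Y]
    (hdimX : 2 ≤ Module.rank ℝ X) (hdimY : 2 ≤ Module.rank ℝ Y)
    (T : X →L[ℝ] Y) (x₀ : X) (hx₀ : ‖x₀‖ = 1)
    (hMT : {x : X | ‖x‖ = 1 ∧ ‖T x‖ = ‖T‖} = {x₀, -x₀})
    (P : X →L[ℝ] X)
    (hPidem : ∀ z : X, P (P z) = P z)
    (hPL : ∀ z : X, ‖z‖ = ‖P z‖ + ‖z - P z‖)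
    (hPrange : LinearMap.range (P : X →ₗ[ℝ] X) = Submodule.span ℝ ({x₀} : Set X))
    (hker : ‖T.comp (LinearMap.ker (P : X →ₗ[ℝ] X)).subtypeL‖ < ‖T‖)
    (x : ℕ → X) (hx : ∀ n, ‖x n‖ = 1)
    (hnorming : Filter.Tendsto (fun n => ‖T (x n)‖) Filter.atTop (nhds ‖T‖)) :
    ∃ (a : ℝ) (φ : ℕ → ℕ), |a| = 1 ∧ StrictMono φ ∧
      Filter.Tendsto (fun n => x (φ n)) Filter.atTop (nhds (a • x₀)) :=
  norming_sequence_subsequence_converges_general T x₀ hx₀ P hPidem hPL hPrange hker x hx hnorming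
end

section
/- Let X and Y be real normed linear spaces of dimension at least 2, and let T be a bounded linear operator from X to Y whose norm attainment set is M_T = {x₀, −x₀} for some x₀ ∈ X with ‖x₀‖ = 1. Suppose P is an L-projection on X whose range is span{x₀}, and suppose that the restriction of T to ker(P) has norm strictly less than ‖T‖. Then for any bounded linear operator A from X to Y and any ε ∈ [0,1), T ⊥_B^ε A if and only if ‖Tx₀ + λAx₀‖² ≥ ‖Tx₀‖² − 2ε‖Tx₀‖·‖λA‖ for all real λ. -/
/-!
Since `P` is an L-projection onto `span {x₀}`, every operator `S` satisfies
`‖S‖ ≤ max ‖S x₀‖ ‖S|ker P‖`. For `S = T + λ A` the second term is at most `‖T|ker P‖ + ‖λ A‖`,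
which for small `λ` lies strictly below `√(‖T‖² - 2ε‖T‖‖λ A‖)`; so for small `λ` the operator
inequality can only be witnessed at `x₀`. The function `λ ↦ ‖T x₀ + λ A x₀‖²` is convex and its
lower bound is affine on each half-line, so the inequality spreads from small `λ` to all `λ`.
The converse is immediate from `‖T x₀ + λ A x₀‖ ≤ ‖T + λ A‖`.
-/

open Set Filter Topology

section LProjection

variable {X Y : Type*} [NormedAddCommGroup X] [NormedSpace ℝ X]
    [NormedAddCommGroup Y] [NormedSpace ℝ Y]
    {P : Module.End ℝ X} {x₀ : X}

theorem IsLprojection.opNorm_le_max (hP : IsLprojection X P) (hx₀ : ‖x₀‖ = 1)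
    (hrange : LinearMap.range P ≤ Submodule.span ℝ {x₀}) (S : X →L[ℝ] Y) :
    ‖S‖ ≤ max ‖S x₀‖ ‖S.comp (LinearMap.ker P).subtypeL‖ := by
  refine S.opNorm_le_bound (le_max_of_le_right (ContinuousLinearMap.opNorm_nonneg _)) fun x => ?_
  obtain ⟨α, hα⟩ := Submodule.mem_span_singleton.1 (hrange ⟨x, rfl⟩)
  have hker : x - P x ∈ LinearMap.ker P := by
    rw [LinearMap.mem_ker, map_sub, ← Module.End.mul_apply, hP.proj.eq, sub_self]
  have hnorm : ‖x‖ = |α| + ‖x - P x‖ := by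
    simpa [Module.End.smul_def, ← hα, norm_smul, hx₀] using hP.Lnorm x
  calc ‖S x‖ = ‖α • S x₀ + S.comp (LinearMap.ker P).subtypeL ⟨x - P x, hker⟩‖ := by
        simp [← map_smul, hα]
    _ ≤ |α| * ‖S x₀‖ + ‖S.comp (LinearMap.ker P).subtypeL‖ * ‖x - P x‖ :=
        norm_add_le_of_le (by rw [norm_smul, Real.norm_eq_abs]) (ContinuousLinearMap.le_opNorm _ _)
    _ ≤ |α| * max ‖S x₀‖ ‖S.comp (LinearMap.ker P).subtypeL‖
          + max ‖S x₀‖ ‖S.comp (LinearMap.ker P).subtypeL‖ * ‖x - P x‖ := by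
        gcongr
        exacts [le_max_left _ _, le_max_right _ _]
    _ = max ‖S x₀‖ ‖S.comp (LinearMap.ker P).subtypeL‖ * ‖x‖ := by rw [hnorm]; ring

theorem IsLprojection.norm_add_le_max (hP : IsLprojection X P) (hx₀ : ‖x₀‖ = 1)
    (hrange : LinearMap.range P ≤ Submodule.span ℝ {x₀}) (T B : X →L[ℝ] Y) :
    ‖T + B‖ ≤ max ‖T x₀ + B x₀‖ (‖T.comp (LinearMap.ker P).subtypeL‖ + ‖B‖) := by
  refine (hP.opNorm_le_max hx₀ hrange (T + B)).trans (max_le_max le_rfl ?_)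
  rw [ContinuousLinearMap.add_comp]
  refine (ContinuousLinearMap.opNorm_add_le _ _).trans (add_le_add_right ?_ _)
  exact (B.opNorm_comp_le _).trans
    (mul_le_of_le_one_right (norm_nonneg _) (Submodule.norm_subtypeL_le _))

end LProjection

theorem convexOn_norm_add_smul_sq {E : Type*} [SeminormedAddCommGroup E] [NormedSpace ℝ E]
    (u v : E) : ConvexOn ℝ univ (fun t : ℝ => ‖u + t • v‖ ^ 2) := by
  have hconv : ConvexOn ℝ univ (fun t : ℝ => ‖u + t • v‖) := by
    refine ⟨convex_univ, fun x _ y _ a b ha hb hab => ?_⟩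
    calc ‖u + (a • x + b • y) • v‖ = ‖a • (u + x • v) + b • (u + y • v)‖ := by
          congr 1
          linear_combination (norm := module) -hab • u
      _ ≤ a • ‖u + x • v‖ + b • ‖u + y • v‖ := by
          refine (norm_add_le _ _).trans_eq ?_
          rw [norm_smul_of_nonneg ha, norm_smul_of_nonneg hb, smul_eq_mul, smul_eq_mul]
  exact hconv.pow (fun _ _ => norm_nonneg _) 2

theorem ConvexOn.sub_mul_le_of_eventually {g : ℝ → ℝ} {m l : ℝ} (hg : ConvexOn ℝ (Ici 0) g)
    (h : ∀ᶠ t in 𝓝[>] 0, g 0 - m * t ≤ g t) (hl : 0 ≤ l) : g 0 - m * l ≤ g l := by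
  rcases hl.eq_or_lt with rfl | hl
  · simp
  obtain ⟨t, ht, ht₀, htl⟩ := (h.and (Ioo_mem_nhdsGT hl)).exists
  have hslope := hg.secant_mono self_mem_Ici ht₀.le hl.le ht₀.ne' hl.ne' htl.le
  rw [sub_zero, sub_zero] at hslope
  have hsmall : -m ≤ (g t - g 0) / t := by rw [le_div_iff₀ ht₀]; linarith
  have := (le_div_iff₀ hl).1 (hsmall.trans hslope)
  linarith

theorem le_norm_apply_add_smul_sq_of_le_norm_add_smul_sq
    {X Y : Type*} [NormedAddCommGroup X] [NormedSpace ℝ X]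
    [NormedAddCommGroup Y] [NormedSpace ℝ Y]
    {T A : X →L[ℝ] Y} {x₀ : X} {k ε l : ℝ} (hTx₀ : ‖T x₀‖ = ‖T‖) (hk₀ : 0 ≤ k) (hk : k < ‖T‖)
    (hbound : ∀ t : ℝ, ‖T + t • A‖ ≤ max ‖T x₀ + t • A x₀‖ (k + ‖t • A‖))
    (h : ∀ t : ℝ, ‖T‖ ^ 2 - 2 * ε * ‖T‖ * ‖t • A‖ ≤ ‖T + t • A‖ ^ 2) (hl : 0 ≤ l) :
    ‖T‖ ^ 2 - 2 * ε * ‖T‖ * ‖l • A‖ ≤ ‖T x₀ + l • A x₀‖ ^ 2 := by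
  have hnear : ∀ᶠ t in 𝓝 (0 : ℝ), (k + ‖t • A‖) ^ 2 < ‖T‖ ^ 2 - 2 * ε * ‖T‖ * ‖t • A‖ :=
    ContinuousAt.eventually_lt (by fun_prop) (by fun_prop)
      (by simpa using pow_lt_pow_left₀ hk hk₀ two_ne_zero)
  have hpointwise : ∀ᶠ t in 𝓝[>] 0, ‖T x₀ + (0 : ℝ) • A x₀‖ ^ 2 - 2 * ε * ‖T‖ * ‖A‖ * t
      ≤ ‖T x₀ + t • A x₀‖ ^ 2 := by
    filter_upwards [nhdsWithin_le_nhds hnear, self_mem_nhdsWithin] with t hlt ht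
    rw [zero_smul, add_zero, hTx₀, mul_assoc _ ‖A‖, mul_comm ‖A‖, ← norm_smul_of_nonneg ht.le]
    rcases le_max_iff.1 (hbound t) with hattained | hker
    · exact (h t).trans (pow_le_pow_left₀ (norm_nonneg _) hattained 2)
    · linarith [h t, pow_le_pow_left₀ (norm_nonneg _) hker 2]
  have := ((convexOn_norm_add_smul_sq (T x₀) (A x₀)).subset (subset_univ _)
    (convex_Ici 0)).sub_mul_le_of_eventually hpointwise hl
  rwa [zero_smul, add_zero, hTx₀, mul_assoc _ ‖A‖, mul_comm ‖A‖, ← norm_smul_of_nonneg hl]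
    at this

theorem approx_BJ_orthogonality_Lideal_general
    {X Y : Type*} [NormedAddCommGroup X] [NormedSpace ℝ X]
    [NormedAddCommGroup Y] [NormedSpace ℝ Y]
    (T : X →L[ℝ] Y) (x₀ : X) (hx₀ : ‖x₀‖ = 1)
    (hMT : {x : X | ‖x‖ = 1 ∧ ‖T x‖ = ‖T‖} = {x₀, -x₀})
    (P : X →L[ℝ] X)
    (hPidem : ∀ z : X, P (P z) = P z)
    (hPL : ∀ z : X, ‖z‖ = ‖P z‖ + ‖z - P z‖)
    (hPrange : LinearMap.range (P : X →ₗ[ℝ] X) = Submodule.span ℝ ({x₀} : Set X))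
    (hker : ‖T.comp (LinearMap.ker (P : X →ₗ[ℝ] X)).subtypeL‖ < ‖T‖)
    (A : X →L[ℝ] Y) (ε : ℝ) :
    (∀ l : ℝ, ‖T‖ ^ 2 - 2 * ε * ‖T‖ * ‖l • A‖ ≤ ‖T + l • A‖ ^ 2) ↔
      (∀ l : ℝ, ‖T x₀‖ ^ 2 - 2 * ε * ‖T x₀‖ * ‖l • A‖ ≤ ‖T x₀ + l • A x₀‖ ^ 2) := by
  have hTx₀ : ‖T x₀‖ = ‖T‖ := (hMT ▸ mem_insert x₀ _ : x₀ ∈ {x : X | ‖x‖ = 1 ∧ ‖T x‖ = ‖T‖}).2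
  have hP : IsLprojection X (P : X →ₗ[ℝ] X) :=
    ⟨LinearMap.ext hPidem, fun z => by simpa [Module.End.smul_def] using hPL z⟩
  have hbound (B : X →L[ℝ] Y) (t : ℝ) : ‖T + t • B‖ ≤
      max ‖T x₀ + t • B x₀‖ (‖T.comp (LinearMap.ker (P : X →ₗ[ℝ] X)).subtypeL‖ + ‖t • B‖) :=
    hP.norm_add_le_max hx₀ hPrange.le T (t • B)
  refine ⟨fun h l => ?_, fun h l => ?_⟩
  · rw [hTx₀]
    rcases le_total 0 l with hl | hl
    · exact le_norm_apply_add_smul_sq_of_le_norm_add_smul_sq hTx₀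
        (ContinuousLinearMap.opNorm_nonneg _) hker (hbound A) h hl
    · simpa using le_norm_apply_add_smul_sq_of_le_norm_add_smul_sq hTx₀
        (ContinuousLinearMap.opNorm_nonneg _) hker (hbound (-A)) (fun t => by simpa using h (-t))
        (neg_nonneg.2 hl)
  · calc ‖T‖ ^ 2 - 2 * ε * ‖T‖ * ‖l • A‖ ≤ ‖T x₀ + l • A x₀‖ ^ 2 := hTx₀ ▸ h l
      _ ≤ ‖T + l • A‖ ^ 2 := by
        gcongr
        simpa [hx₀] using (T + l • A).le_opNorm x₀

/-- **Theorem 6 (main part).** Let `X, Y` be real normed spaces of dimension ≥ 2,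
`T : X → Y` bounded linear with norm attainment set `{x₀, -x₀}` (`‖x₀‖ = 1`), let
`P` be an L-projection on `X` with range `span{x₀}` and suppose `‖T|_{ker P}‖ < ‖T‖`.
Then for any bounded linear operator `A` and `ε ∈ [0,1)`, `T ⊥_B^ε A` iff
`‖Tx₀ + λ Ax₀‖² ≥ ‖Tx₀‖² - 2 ε ‖Tx₀‖ ‖λ A‖` for all real `λ`. -/
theorem approx_BJ_orthogonality_Lideal
    {X Y : Type*} [NormedAddCommGroup X] [NormedSpace ℝ X]
    [NormedAddCommGroup Y] [NormedSpace ℝ Y]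
    (hdimX : 2 ≤ Module.rank ℝ X) (hdimY : 2 ≤ Module.rank ℝ Y)
    (T : X →L[ℝ] Y) (x₀ : X) (hx₀ : ‖x₀‖ = 1)
    (hMT : {x : X | ‖x‖ = 1 ∧ ‖T x‖ = ‖T‖} = {x₀, -x₀})
    (P : X →L[ℝ] X)
    (hPidem : ∀ z : X, P (P z) = P z)
    (hPL : ∀ z : X, ‖z‖ = ‖P z‖ + ‖z - P z‖)
    (hPrange : LinearMap.range (P : X →ₗ[ℝ] X) = Submodule.span ℝ ({x₀} : Set X))
    (hker : ‖T.comp (LinearMap.ker (P : X →ₗ[ℝ] X)).subtypeL‖ < ‖T‖)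
    (A : X →L[ℝ] Y) (ε : ℝ) (hε : ε ∈ Set.Ico (0 : ℝ) 1) :
    (∀ l : ℝ, ‖T‖ ^ 2 - 2 * ε * ‖T‖ * ‖l • A‖ ≤ ‖T + l • A‖ ^ 2) ↔
      (∀ l : ℝ, ‖T x₀‖ ^ 2 - 2 * ε * ‖T x₀‖ * ‖l • A‖ ≤ ‖T x₀ + l • A x₀‖ ^ 2) :=
  approx_BJ_orthogonality_Lideal_general T x₀ hx₀ hMT P hPidem hPL hPrange hker A ε
end

section
/- Let X and Y be real normed linear spaces of dimension at least 2, and let T be a bounded linear operator from X to Y whose norm attainment set is M_T = {x₀, −x₀} for some x₀ ∈ X with ‖x₀‖ = 1. Suppose P is an L-projection on X whose range is span{x₀}, and suppose that the restriction of T to ker(P) has norm strictly less than ‖T‖. Let A be a bounded linear operator from X to Y with x₀ ∈ M_A, and let ε ∈ [0,1). Then T ⊥_B^ε A if and only if Tx₀ ⊥_B^ε Ax₀. -/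
/-!
Writing `x = t • x₀ + (x - P x)` with `‖x‖ = |t| + ‖x - P x‖` shows that an operator `S` with
`‖S|ker P‖ ≤ ‖S x₀‖` attains its norm at `x₀`. The strict inequality `‖T|ker P‖ < ‖T x₀‖`
persists for `S = T + λ A` with `λ` near `0`, so there `‖T + λ A‖ = ‖(T + λ A) x₀‖`. Since
`λ ↦ ‖u + λ v‖` is convex, the ε-Birkhoff–James inequality holds for all `λ` as soon as it holds
near `0`, which gives the hard direction.
-/

open Filter Topology

def ApproxBJOrthogonal {E : Type*} [SeminormedAddCommGroup E] [NormedSpace ℝ E]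
    (ε : ℝ) (u v : E) : Prop :=
  ∀ l : ℝ, ‖u‖ ^ 2 - 2 * ε * ‖u‖ * ‖l • v‖ ≤ ‖u + l • v‖ ^ 2

lemma sq_sub_le_sq_of_le_convexComb {a b m s t ε : ℝ} (ht₀ : 0 < t) (ht₁ : t ≤ 1)
    (hm₀ : 0 ≤ m) (hm : m ≤ (1 - t) * a + t * b)
    (h : a ^ 2 - 2 * ε * a * (t * s) ≤ m ^ 2) :
    a ^ 2 - 2 * ε * a * s ≤ b ^ 2 := by
  have hm_sq : m ^ 2 ≤ ((1 - t) * a + t * b) ^ 2 := pow_le_pow_left₀ hm₀ hm 2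
  have ht_sq : t * (t * (a - b) ^ 2) ≤ t * (a - b) ^ 2 :=
    mul_le_mul_of_nonneg_left (mul_le_of_le_one_left (sq_nonneg _) ht₁) ht₀.le
  refine le_of_mul_le_mul_left ?_ ht₀
  nlinarith

section ApproxBJOrthogonal

variable {E : Type*} [SeminormedAddCommGroup E] [NormedSpace ℝ E] {u v : E} {ε : ℝ}

/-- Convexity: `‖u + (t * l) • v‖ ≤ (1 - t) * ‖u‖ + t * ‖u + l • v‖`. -/
lemma approxBJ_ineq_of_ineq_mul {t l : ℝ} (ht₀ : 0 < t) (ht₁ : t ≤ 1)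
    (h : ‖u‖ ^ 2 - 2 * ε * ‖u‖ * ‖(t * l) • v‖ ≤ ‖u + (t * l) • v‖ ^ 2) :
    ‖u‖ ^ 2 - 2 * ε * ‖u‖ * ‖l • v‖ ≤ ‖u + l • v‖ ^ 2 := by
  have hconv : ‖u + (t * l) • v‖ ≤ (1 - t) * ‖u‖ + t * ‖u + l • v‖ := by
    have hcomb : u + (t * l) • v = (1 - t) • u + t • (u + l • v) := by module
    rw [hcomb]
    refine (norm_add_le _ _).trans_eq ?_
    rw [norm_smul, norm_smul, Real.norm_of_nonneg (sub_nonneg.2 ht₁), Real.norm_of_nonneg ht₀.le]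
  rw [mul_smul] at h hconv
  rw [norm_smul t, Real.norm_of_nonneg ht₀.le] at h
  exact sq_sub_le_sq_of_le_convexComb ht₀ ht₁ (norm_nonneg _) hconv h

theorem approxBJOrthogonal_of_eventually
    (h : ∀ᶠ l in 𝓝 (0 : ℝ), ‖u‖ ^ 2 - 2 * ε * ‖u‖ * ‖l • v‖ ≤ ‖u + l • v‖ ^ 2) :
    ApproxBJOrthogonal ε u v := by
  intro l
  have hscale : Tendsto (fun t : ℝ => t * l) (𝓝[>] 0) (𝓝 0) := by
    simpa using ((continuous_mul_const l).tendsto 0).mono_left nhdsWithin_le_nhds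
  obtain ⟨t, ht, ht₀, ht₁⟩ := ((hscale.eventually h).and (Ioc_mem_nhdsGT one_pos)).exists
  exact approxBJ_ineq_of_ineq_mul ht₀ ht₁ ht

end ApproxBJOrthogonal

section LProjection

variable {X Y : Type*} [SeminormedAddCommGroup X] [NormedSpace ℝ X]
  [SeminormedAddCommGroup Y] [NormedSpace ℝ Y]

theorem opNorm_le_norm_apply_of_isLProjection {P : X →L[ℝ] X} {x₀ : X}
    (hPidem : ∀ z : X, P (P z) = P z) (hPL : ∀ z : X, ‖z‖ = ‖P z‖ + ‖z - P z‖)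
    (hPrange : LinearMap.range (P : X →ₗ[ℝ] X) = Submodule.span ℝ ({x₀} : Set X))
    (hx₀ : ‖x₀‖ = 1) (S : X →L[ℝ] Y)
    (hS : ‖S.comp (LinearMap.ker (P : X →ₗ[ℝ] X)).subtypeL‖ ≤ ‖S x₀‖) :
    ‖S‖ ≤ ‖S x₀‖ := by
  refine S.opNorm_le_bound (norm_nonneg _) fun x => ?_
  obtain ⟨t, ht⟩ : ∃ t : ℝ, t • x₀ = P x := Submodule.mem_span_singleton.1 <|
    hPrange ▸ LinearMap.mem_range_self (P : X →ₗ[ℝ] X) x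
  have hker : x - P x ∈ LinearMap.ker (P : X →ₗ[ℝ] X) := by
    simp [hPidem]
  have hPx : ‖P x‖ = |t| := by rw [← ht, norm_smul, hx₀, mul_one, Real.norm_eq_abs]
  have hkerx : ‖S (x - P x)‖ ≤ ‖S x₀‖ * ‖x - P x‖ :=
    ((S.comp _).le_opNorm ⟨x - P x, hker⟩).trans (mul_le_mul_of_nonneg_right hS (norm_nonneg _))
  calc ‖S x‖ = ‖t • S x₀ + S (x - P x)‖ := by rw [← map_smul, ← map_add, ht, add_sub_cancel]
    _ ≤ |t| * ‖S x₀‖ + ‖S x₀‖ * ‖x - P x‖ := by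
      grw [norm_add_le, norm_smul, Real.norm_eq_abs, hkerx]
    _ = ‖S x₀‖ * ‖x‖ := by rw [hPL x, hPx]; ring

end LProjection

theorem eventually_norm_comp_lt_norm_apply {K X Y : Type*} [SeminormedAddCommGroup K]
    [NormedSpace ℝ K] [SeminormedAddCommGroup X] [NormedSpace ℝ X]
    [SeminormedAddCommGroup Y] [NormedSpace ℝ Y] {T : X →L[ℝ] Y} {x₀ : X}
    (ι : K →L[ℝ] X) (A : X →L[ℝ] Y) (h : ‖T.comp ι‖ < ‖T x₀‖) :
    ∀ᶠ l in 𝓝 (0 : ℝ), ‖(T + l • A).comp ι‖ < ‖(T + l • A) x₀‖ := by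
  simp only [ContinuousLinearMap.add_comp, ContinuousLinearMap.smul_comp,
    add_apply, smul_apply]
  exact ContinuousAt.eventually_lt (by fun_prop) (by fun_prop) (by simpa using h)

theorem approx_BJ_orthogonality_Lideal_normAttaining_general
    {X Y : Type*} [NormedAddCommGroup X] [NormedSpace ℝ X]
    [NormedAddCommGroup Y] [NormedSpace ℝ Y]
    (T : X →L[ℝ] Y) (x₀ : X) (hx₀ : ‖x₀‖ = 1)
    (hMT : {x : X | ‖x‖ = 1 ∧ ‖T x‖ = ‖T‖} = {x₀, -x₀})
    (P : X →L[ℝ] X)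
    (hPidem : ∀ z : X, P (P z) = P z)
    (hPL : ∀ z : X, ‖z‖ = ‖P z‖ + ‖z - P z‖)
    (hPrange : LinearMap.range (P : X →ₗ[ℝ] X) = Submodule.span ℝ ({x₀} : Set X))
    (hker : ‖T.comp (LinearMap.ker (P : X →ₗ[ℝ] X)).subtypeL‖ < ‖T‖)
    (A : X →L[ℝ] Y) (hx₀A : ‖A x₀‖ = ‖A‖)
    (ε : ℝ) :
    (∀ l : ℝ, ‖T‖ ^ 2 - 2 * ε * ‖T‖ * ‖l • A‖ ≤ ‖T + l • A‖ ^ 2) ↔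
      (∀ l : ℝ, ‖T x₀‖ ^ 2 - 2 * ε * ‖T x₀‖ * ‖l • A x₀‖ ≤ ‖T x₀ + l • A x₀‖ ^ 2) := by
  have hTx₀ : ‖T x₀‖ = ‖T‖ := (hMT ▸ Set.mem_insert x₀ {-x₀} : x₀ ∈ {x : X | _}).2
  have hAx₀ (l : ℝ) : ‖l • A x₀‖ = ‖l • A‖ := by rw [norm_smul, norm_smul, hx₀A]
  have hle (l : ℝ) : ‖T x₀ + l • A x₀‖ ≤ ‖T + l • A‖ := by
    simpa [hx₀] using (T + l • A).le_opNorm x₀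
  have hnear : ∀ᶠ l in 𝓝 (0 : ℝ), ‖T + l • A‖ ≤ ‖T x₀ + l • A x₀‖ := by
    refine (eventually_norm_comp_lt_norm_apply _ A (hTx₀ ▸ hker)).mono fun l hl => ?_
    simpa using opNorm_le_norm_apply_of_isLProjection hPidem hPL hPrange hx₀ (T + l • A) hl.le
  constructor
  · intro hT
    refine approxBJOrthogonal_of_eventually (hnear.mono fun l hl => ?_)
    rw [hTx₀, hAx₀]
    exact (hT l).trans (by gcongr)
  · intro h l
    rw [← hTx₀, ← hAx₀]
    exact (h l).trans (by gcongr; exact hle l)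

/-- **Theorem 6 ("moreover" part).** Under the hypotheses of the main part, if
additionally `x₀ ∈ M_A`, then `T ⊥_B^ε A` iff `Tx₀ ⊥_B^ε Ax₀`. -/
theorem approx_BJ_orthogonality_Lideal_normAttaining
    {X Y : Type*} [NormedAddCommGroup X] [NormedSpace ℝ X]
    [NormedAddCommGroup Y] [NormedSpace ℝ Y]
    (hdimX : 2 ≤ Module.rank ℝ X) (hdimY : 2 ≤ Module.rank ℝ Y)
    (T : X →L[ℝ] Y) (x₀ : X) (hx₀ : ‖x₀‖ = 1)
    (hMT : {x : X | ‖x‖ = 1 ∧ ‖T x‖ = ‖T‖} = {x₀, -x₀})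
    (P : X →L[ℝ] X)
    (hPidem : ∀ z : X, P (P z) = P z)
    (hPL : ∀ z : X, ‖z‖ = ‖P z‖ + ‖z - P z‖)
    (hPrange : LinearMap.range (P : X →ₗ[ℝ] X) = Submodule.span ℝ ({x₀} : Set X))
    (hker : ‖T.comp (LinearMap.ker (P : X →ₗ[ℝ] X)).subtypeL‖ < ‖T‖)
    (A : X →L[ℝ] Y) (hx₀A : ‖A x₀‖ = ‖A‖)
    (ε : ℝ) (hε : ε ∈ Set.Ico (0 : ℝ) 1) :
    (∀ l : ℝ, ‖T‖ ^ 2 - 2 * ε * ‖T‖ * ‖l • A‖ ≤ ‖T + l • A‖ ^ 2) ↔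
      (∀ l : ℝ, ‖T x₀‖ ^ 2 - 2 * ε * ‖T x₀‖ * ‖l • A x₀‖ ≤ ‖T x₀ + l • A x₀‖ ^ 2) :=
  approx_BJ_orthogonality_Lideal_normAttaining_general T x₀ hx₀ hMT P hPidem hPL hPrange hker A hx₀A
    ε
end

section
/- Let X and Y be real normed linear spaces of dimension at least 2, and let T be a bounded linear operator from X to Y whose norm attainment set is M_T = {x₀, −x₀} for some x₀ ∈ X with ‖x₀‖ = 1. Suppose P is an L-projection on X whose range is span{x₀}, and suppose that the restriction of T to ker(P) has norm strictly less than ‖T‖. Then for any bounded linear operator A from X to Y, T ⊥_B A if and only if Tx₀ ⊥_B Ax₀. -/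
/-!
Since `P` is an L-projection onto `span {x₀}`, every `x` splits as `a • x₀ + w` with `w ∈ ker P`
and `‖x‖ = |a| + ‖w‖`, so the norm of any operator `S` is at most the larger of `‖S x₀‖` and
`‖S|_{ker P}‖`. If `‖T x₀ + l • A x₀‖ < ‖T‖` for some `l`, convexity keeps `‖T x₀ + t l • A x₀‖`
below `‖T‖` for `t ∈ (0, 1]`, while continuity keeps `‖(T + t l • A)|_{ker P}‖` below `‖T‖` for
small `t`; hence `‖T + t l • A‖ < ‖T‖` and `T` is not orthogonal to `A`.
-/

open Filter Topology

namespace ContinuousLinearMap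

variable {𝕜 X Y : Type*} [NontriviallyNormedField 𝕜]
  [NormedAddCommGroup X] [NormedSpace 𝕜 X] [NormedAddCommGroup Y] [NormedSpace 𝕜 Y]

theorem opNorm_le_max_of_Lprojection (S : X →L[𝕜] Y) (P : X →L[𝕜] X)
    (hPidem : ∀ z : X, P (P z) = P z) (hPL : ∀ z : X, ‖z‖ = ‖P z‖ + ‖z - P z‖) :
    ‖S‖ ≤ max ‖S.comp (LinearMap.range (P : X →ₗ[𝕜] X)).subtypeL‖
      ‖S.comp (LinearMap.ker (P : X →ₗ[𝕜] X)).subtypeL‖ := by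
  set a := ‖S.comp (LinearMap.range (P : X →ₗ[𝕜] X)).subtypeL‖
  set b := ‖S.comp (LinearMap.ker (P : X →ₗ[𝕜] X)).subtypeL‖
  refine S.opNorm_le_bound (le_max_of_le_left (norm_nonneg _)) fun x => ?_
  have hrange : ‖S (P x)‖ ≤ a * ‖P x‖ := by
    simpa using (S.comp (LinearMap.range (P : X →ₗ[𝕜] X)).subtypeL).le_opNorm
      ⟨P x, LinearMap.mem_range_self _ x⟩
  have hker : ‖S (x - P x)‖ ≤ b * ‖x - P x‖ := by
    simpa using (S.comp (LinearMap.ker (P : X →ₗ[𝕜] X)).subtypeL).le_opNorm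
      ⟨x - P x, by simp [hPidem]⟩
  calc ‖S x‖ = ‖S (P x) + S (x - P x)‖ := by rw [← map_add, add_sub_cancel]
    _ ≤ a * ‖P x‖ + b * ‖x - P x‖ := norm_add_le_of_le hrange hker
    _ ≤ max a b * ‖P x‖ + max a b * ‖x - P x‖ := by gcongr <;> simp
    _ = max a b * ‖x‖ := by rw [hPL x]; ring

theorem opNorm_comp_span_singleton_subtypeL_le (S : X →L[𝕜] Y) {x : X} (hx : ‖x‖ = 1) :
    ‖S.comp (Submodule.span 𝕜 {x}).subtypeL‖ ≤ ‖S x‖ := by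
  refine opNorm_le_bound _ (norm_nonneg _) fun ⟨y, hy⟩ => ?_
  obtain ⟨a, rfl⟩ := Submodule.mem_span_singleton.mp hy
  simp [norm_smul, hx, mul_comm]

end ContinuousLinearMap

theorem norm_add_mul_smul_lt_of_norm_add_smul_lt {E : Type*} [SeminormedAddCommGroup E]
    [NormedSpace ℝ E] {u v : E} {l t : ℝ} (h : ‖u + l • v‖ < ‖u‖) (ht₀ : 0 < t) (ht₁ : t ≤ 1) :
    ‖u + (t * l) • v‖ < ‖u‖ :=
  calc ‖u + (t * l) • v‖ = ‖(1 - t) • u + t • (u + l • v)‖ := by congr 1; module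
    _ ≤ (1 - t) * ‖u‖ + t * ‖u + l • v‖ := by
      refine norm_add_le_of_le ?_ ?_ <;>
        rw [norm_smul, Real.norm_of_nonneg (by linarith)]
    _ < ‖u‖ := by nlinarith

theorem BJ_orthogonality_Lideal_general
    {X Y : Type*} [NormedAddCommGroup X] [NormedSpace ℝ X]
    [NormedAddCommGroup Y] [NormedSpace ℝ Y]
    (T : X →L[ℝ] Y) (x₀ : X) (hx₀ : ‖x₀‖ = 1)
    (hMT : {x : X | ‖x‖ = 1 ∧ ‖T x‖ = ‖T‖} = {x₀, -x₀})
    (P : X →L[ℝ] X)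
    (hPidem : ∀ z : X, P (P z) = P z)
    (hPL : ∀ z : X, ‖z‖ = ‖P z‖ + ‖z - P z‖)
    (hPrange : LinearMap.range (P : X →ₗ[ℝ] X) = Submodule.span ℝ ({x₀} : Set X))
    (hker : ‖T.comp (LinearMap.ker (P : X →ₗ[ℝ] X)).subtypeL‖ < ‖T‖)
    (A : X →L[ℝ] Y) :
    (∀ l : ℝ, ‖T‖ ≤ ‖T + l • A‖) ↔ (∀ l : ℝ, ‖T x₀‖ ≤ ‖T x₀ + l • A x₀‖) := by
  have hx₀_mem : x₀ ∈ {x : X | ‖x‖ = 1 ∧ ‖T x‖ = ‖T‖} := hMT ▸ Set.mem_insert x₀ {-x₀}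
  have hTx₀ : ‖T x₀‖ = ‖T‖ := hx₀_mem.2
  have hnorm_le (S : X →L[ℝ] Y) :
      ‖S‖ ≤ max ‖S x₀‖ ‖S.comp (LinearMap.ker (P : X →ₗ[ℝ] X)).subtypeL‖ := by
    refine (S.opNorm_le_max_of_Lprojection P hPidem hPL).trans (max_le_max_right _ ?_)
    rw [hPrange]
    exact S.opNorm_comp_span_singleton_subtypeL_le hx₀
  refine ⟨fun h => ?_, fun h l => ?_⟩
  · by_contra! ⟨l, hl⟩
    have hker_cont : Continuous fun t : ℝ =>
        ‖(T + (t * l) • A).comp (LinearMap.ker (P : X →ₗ[ℝ] X)).subtypeL‖ :=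
      ((by fun_prop : Continuous fun t : ℝ => T + (t * l) • A).clm_comp continuous_const).norm
    have hker_small : ∀ᶠ t in 𝓝[>] (0 : ℝ),
        ‖(T + (t * l) • A).comp (LinearMap.ker (P : X →ₗ[ℝ] X)).subtypeL‖ < ‖T‖ :=
      nhdsWithin_le_nhds <| hker_cont.continuousAt.eventually_lt continuousAt_const (by simpa)
    obtain ⟨t, ht, ⟨ht₀, ht₁⟩⟩ := (hker_small.and (Ioc_mem_nhdsGT one_pos)).exists
    have hx₀_small : ‖(T + (t * l) • A) x₀‖ < ‖T‖ := by
      simpa [hTx₀] using norm_add_mul_smul_lt_of_norm_add_smul_lt hl ht₀ ht₁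
    exact (h (t * l)).not_gt ((hnorm_le _).trans_lt (max_lt hx₀_small ht))
  · calc ‖T‖ = ‖T x₀‖ := hTx₀.symm
      _ ≤ ‖(T + l • A) x₀‖ := by simpa using h l
      _ ≤ ‖T + l • A‖ := (T + l • A).unit_le_opNorm x₀ hx₀.le

/-- **Corollary 7.** Let `X, Y` be real normed spaces of dimension ≥ 2, `T : X → Y`
bounded linear with norm attainment set `{x₀, -x₀}` (`‖x₀‖ = 1`), `P` an L-projection
on `X` with range `span{x₀}` and `‖T|_{ker P}‖ < ‖T‖`. Then for any bounded linear
operator `A`, `T ⊥_B A` iff `Tx₀ ⊥_B Ax₀`. -/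
theorem BJ_orthogonality_Lideal
    {X Y : Type*} [NormedAddCommGroup X] [NormedSpace ℝ X]
    [NormedAddCommGroup Y] [NormedSpace ℝ Y]
    (hdimX : 2 ≤ Module.rank ℝ X) (hdimY : 2 ≤ Module.rank ℝ Y)
    (T : X →L[ℝ] Y) (x₀ : X) (hx₀ : ‖x₀‖ = 1)
    (hMT : {x : X | ‖x‖ = 1 ∧ ‖T x‖ = ‖T‖} = {x₀, -x₀})
    (P : X →L[ℝ] X)
    (hPidem : ∀ z : X, P (P z) = P z)
    (hPL : ∀ z : X, ‖z‖ = ‖P z‖ + ‖z - P z‖)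
    (hPrange : LinearMap.range (P : X →ₗ[ℝ] X) = Submodule.span ℝ ({x₀} : Set X))
    (hker : ‖T.comp (LinearMap.ker (P : X →ₗ[ℝ] X)).subtypeL‖ < ‖T‖)
    (A : X →L[ℝ] Y) :
    (∀ l : ℝ, ‖T‖ ≤ ‖T + l • A‖) ↔ (∀ l : ℝ, ‖T x₀‖ ≤ ‖T x₀ + l • A x₀‖) :=
  BJ_orthogonality_Lideal_general T x₀ hx₀ hMT P hPidem hPL hPrange hker A
end

section
/- Let X be a real reflexive Banach space and Y a real Banach space, both of dimension at least 2. Suppose K(X,Y), the space of compact linear operators from X to Y, is an M-ideal in L(X,Y), the space of bounded linear operators from X to Y. Let T ∈ L(X,Y) with ‖T‖ = 1 and dist(T, K(X,Y)) < 1, and suppose in addition that M_T = D ∪ (−D), where D is a closed connected subset of the unit sphere of X. Then for any A ∈ L(X,Y), T ⊥_B A if and only if there exists x ∈ M_T such that Tx ⊥_B Ax. -/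
/-!
The functionals `S ↦ y (S x)` with `‖x‖, ‖y‖ ≤ 1` norm `L(X, Y)`, so the weak-star closure `C` of
their set is a weak-star compact norming subset of the dual unit ball. If `‖T + λ A‖ ≥ ‖T‖` for all
`λ ≥ 0`, a nested compactness argument gives `e ∈ C` with `e T = ‖T‖` and `e A ≥ 0`. Since
`dist(T, K(X, Y)) < ‖T‖`, the L-projection onto `K(X, Y)⁰` kills `e`; reflexivity and compactness
identify `e` on `K(X, Y)` with some `S ↦ y (S x)`, and the L-norm identity forces equality. Then
`x ∈ M_T` and `‖T x + λ A x‖ ≥ ‖T x‖` for all `λ ≥ 0`; likewise for `λ ≤ 0` at another point.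
The points of `D` where `λ ↦ ‖T x + λ A x‖` drops below `‖T x‖` somewhere on `λ > 0`, resp.
`λ < 0`, form two open sets that are disjoint by convexity; if no point of `D` had `T x ⊥_B A x`
they would disconnect `D`, and `M_T = D ∪ -D` lets both one-sided points be taken in `D`.
-/

open NormedSpace Metric Filter Topology

section Dual

variable {Z : Type*} [NormedAddCommGroup Z] [NormedSpace ℝ Z]

theorem StrongDual.apply_le_norm_mul_norm (f : StrongDual ℝ Z) (x : Z) : f x ≤ ‖f‖ * ‖x‖ :=
  (Real.le_norm_self _).trans (f.le_opNorm x)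

theorem StrongDual.apply_le_norm_of_norm_le_one {f : StrongDual ℝ Z} (hf : ‖f‖ ≤ 1) (x : Z) :
    f x ≤ ‖x‖ :=
  (StrongDual.apply_le_norm_mul_norm f x).trans (mul_le_of_le_one_left (norm_nonneg x) hf)

theorem norm_le_norm_add_smul_of_apply_eq_norm {y : StrongDual ℝ Z} (hy : ‖y‖ ≤ 1) {u v : Z}
    (hyu : y u = ‖u‖) (hyv : 0 ≤ y v) {l : ℝ} (hl : 0 ≤ l) : ‖u‖ ≤ ‖u + l • v‖ :=
  calc ‖u‖ ≤ y (u + l • v) := by simpa [hyu] using mul_nonneg hl hyv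
    _ ≤ ‖u + l • v‖ := StrongDual.apply_le_norm_of_norm_le_one hy _

theorem exists_mem_apply_eq_norm_and_nonneg {C : Set (WeakDual ℝ Z)} (hC : IsCompact C)
    (hC₁ : ∀ e ∈ C, ‖WeakDual.toStrongDual e‖ ≤ 1) (hCnorm : ∀ S, ∃ e ∈ C, e S = ‖S‖)
    {T A : Z} (hTA : ∀ l ∈ Set.Ici (0 : ℝ), ‖T‖ ≤ ‖T + l • A‖) :
    ∃ e ∈ C, e T = ‖T‖ ∧ 0 ≤ e A := by
  have hle : ∀ e ∈ C, e T ≤ ‖T‖ := fun e he =>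
    StrongDual.apply_le_norm_of_norm_le_one (hC₁ e he) T
  have hnonneg : ∀ e ∈ C, ∀ c : ℝ, 0 < c → ‖T‖ ≤ e (T + c • A) → 0 ≤ e A := by
    intro e he c hc h
    rw [map_add, map_smul, smul_eq_mul] at h
    exact (mul_nonneg_iff_of_pos_left hc).1 (by linarith [hle e he])
  set t : ℕ → Set (WeakDual ℝ Z) := fun n => {e ∈ C | ‖T‖ ≤ e (T + (1 / (n + 1) : ℝ) • A)}
  have hclosed : ∀ n, IsClosed (t n) := fun n =>
    hC.isClosed.inter (isClosed_le continuous_const (WeakDual.eval_continuous _))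
  -- `hnonneg` is what makes the sets `t n` decrease.
  have hmono : ∀ n, t (n + 1) ⊆ t n := by
    rintro n e ⟨he, h⟩
    refine ⟨he, h.trans ?_⟩
    have hA := hnonneg e he _ (by positivity) h
    simp only [map_add, map_smul, smul_eq_mul, Nat.cast_succ]
    gcongr
    linarith
  have hne : ∀ n, (t n).Nonempty := fun n => by
    obtain ⟨e, he, heS⟩ := hCnorm (T + (1 / (n + 1) : ℝ) • A)
    exact ⟨e, he, heS ▸ hTA _ (Set.mem_Ici.2 (by positivity))⟩
  obtain ⟨e, he⟩ := IsCompact.nonempty_iInter_of_sequence_nonempty_isCompact_isClosed t hmono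
    hne (hC.of_isClosed_subset (hclosed 0) (Set.sep_subset _ _)) hclosed
  rw [Set.mem_iInter] at he
  have heC : e ∈ C := (he 0).1
  have hlim : Tendsto (fun n : ℕ => e (T + (1 / (n + 1) : ℝ) • A)) atTop (𝓝 (e T)) := by
    simp only [map_add, map_smul, smul_eq_mul]
    simpa using tendsto_const_nhds.add (tendsto_one_div_add_atTop_nhds_zero_nat.mul_const (e A))
  exact ⟨e, heC, le_antisymm (hle e heC) (ge_of_tendsto' hlim fun n => (he n).2),
    hnonneg e heC 1 one_pos (by simpa using (he 0).2)⟩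

end Dual

section LProjection

variable {F : Type*} [NormedAddCommGroup F] [NormedSpace ℝ F] {P : F →L[ℝ] F}

theorem IsLprojection.norm_eq_norm_apply_add_norm_sub (hP : IsLprojection F P) (f : F) :
    ‖f‖ = ‖P f‖ + ‖f - P f‖ := by
  simpa [sub_smul] using hP.Lnorm f

theorem IsLprojection.norm_eq_norm_sub_add_norm (hP : IsLprojection F P) {f g : F}
    (hf : P f = 0) (hgf : g - f ∈ Set.range P) : ‖g‖ = ‖g - f‖ + ‖f‖ := by
  obtain ⟨h, hh⟩ := hgf
  have hfix : P (g - f) = g - f := by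
    rw [← hh]
    exact DFunLike.congr_fun hP.proj.eq h
  rw [map_sub, hf, sub_zero] at hfix
  rw [hP.norm_eq_norm_apply_add_norm_sub g, hfix, sub_sub_cancel]

theorem IsLprojection.apply_eq_zero_of_apply_eq_norm {Z : Type*} [NormedAddCommGroup Z]
    [NormedSpace ℝ Z] {P : StrongDual ℝ Z →L[ℝ] StrongDual ℝ Z}
    (hP : IsLprojection (StrongDual ℝ Z) P) {K T : Z} (hPK : ∀ f, P f K = 0)
    (hTK : ‖T - K‖ < ‖T‖) {f : StrongDual ℝ Z} (hf : ‖f‖ ≤ 1) (hfT : f T = ‖T‖) : P f = 0 := by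
  have hPfT : P f T ≤ ‖P f‖ * ‖T - K‖ := by
    calc P f T = P f (T - K) := by rw [map_sub, hPK, sub_zero]
      _ ≤ ‖P f‖ * ‖T - K‖ := StrongDual.apply_le_norm_mul_norm _ _
  have hfT' := StrongDual.apply_le_norm_mul_norm (f - P f) T
  have hsplit : f T = P f T + (f - P f) T := by simp
  have hL := hP.norm_eq_norm_apply_add_norm_sub f
  have : ‖P f‖ * (‖T‖ - ‖T - K‖) ≤ 0 := by
    nlinarith [norm_nonneg (f - P f), norm_nonneg T]
  exact norm_le_zero_iff.1 (nonpos_of_mul_nonpos_left this (by linarith))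

end LProjection

section WeakLimits

variable {X Y : Type*} [NormedAddCommGroup X] [NormedSpace ℝ X]
  [NormedAddCommGroup Y] [NormedSpace ℝ Y]

theorem Ultrafilter.exists_forall_tendsto_apply (V : Ultrafilter (StrongDual ℝ Y))
    (hV : closedBall 0 1 ∈ V) :
    ∃ y ∈ closedBall (0 : StrongDual ℝ Y) 1,
      ∀ w : Y, Tendsto (fun g : StrongDual ℝ Y => g w) V (𝓝 (y w)) := by
  obtain ⟨η, hη, hlim⟩ :=
    (WeakDual.isCompact_closedBall (𝕜 := ℝ) (E := Y) 0 1).ultrafilter_le_nhds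
      (V.map StrongDual.toWeakDual) (le_principal_iff.2 (Ultrafilter.mem_map.2 hV))
  rw [Ultrafilter.coe_map] at hlim
  exact ⟨WeakDual.toStrongDual η, hη,
    fun w => ((WeakDual.eval_continuous w).tendsto η).comp hlim⟩

theorem Ultrafilter.exists_forall_tendsto_apply_of_surjective_inclusionInDoubleDual
    (hrefl : Function.Surjective (inclusionInDoubleDual ℝ X)) (V : Ultrafilter X)
    (hV : closedBall 0 1 ∈ V) :
    ∃ x ∈ closedBall (0 : X) 1, ∀ f : StrongDual ℝ X, Tendsto f V (𝓝 (f x)) := by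
  have hball : closedBall 0 1 ∈ V.map (inclusionInDoubleDual ℝ X) :=
    Ultrafilter.mem_map.2 <| mem_of_superset hV fun x hx =>
      (mem_closedBall_zero_iff (E := StrongDual ℝ (StrongDual ℝ X))).2
        ((double_dual_bound ℝ X x).trans (mem_closedBall_zero_iff.1 hx))
  obtain ⟨ξ, hξ, hlim⟩ := Ultrafilter.exists_forall_tendsto_apply _ hball
  obtain ⟨x, rfl⟩ := hrefl ξ
  refine ⟨x, mem_closedBall_zero_iff.2 ?_, fun f => tendsto_map'_iff.1 (hlim f)⟩
  exact ((inclusionInDoubleDualLi ℝ).norm_map x).symm.trans_le (mem_closedBall_zero_iff.1 hξ)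

theorem IsCompactOperator.tendsto_of_forall_tendsto_apply {K : X →L[ℝ] Y}
    (hK : IsCompactOperator K) {V : Ultrafilter X} {s : Set X} (hs : Bornology.IsBounded s)
    (hsV : s ∈ V) {x : X} (hx : ∀ f : StrongDual ℝ X, Tendsto f V (𝓝 (f x))) :
    Tendsto K V (𝓝 (K x)) := by
  have hK' : IsCompactOperator (K : X →ₗ[ℝ] Y) := hK
  obtain ⟨z, -, hz⟩ := (hK'.isCompact_closure_image_of_bounded hs).ultrafilter_le_nhds
    (V.map K) (le_principal_iff.2 <| Ultrafilter.mem_map.2 <|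
      mem_of_superset hsV fun w hw => subset_closure (Set.mem_image_of_mem K hw))
  rw [Ultrafilter.coe_map] at hz
  have hzK : z = K x := SeparatingDual.eq_iff_forall_dual_eq.2 fun g =>
    tendsto_nhds_unique ((g.continuous.tendsto z).comp hz) (hx (g.comp K))
  exact hzK ▸ hz

theorem tendsto_apply_of_norm_le_of_tendsto {α : Type*} {l : Filter α}
    {g : α → StrongDual ℝ Y} {C : ℝ} (hg : ∀ᶠ a in l, ‖g a‖ ≤ C) {y : StrongDual ℝ Y} {w : Y}
    (hgw : Tendsto (fun a => g a w) l (𝓝 (y w))) {z : α → Y} (hz : Tendsto z l (𝓝 w)) :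
    Tendsto (fun a => g a (z a)) l (𝓝 (y w)) := by
  have hdiff : Tendsto (fun a => g a (z a) - g a w) l (𝓝 0) := by
    refine squeeze_zero_norm' (hg.mono fun a ha => ?_)
      (by simpa using (hz.sub_const w).norm.const_mul C)
    rw [← map_sub]
    exact ((g a).le_opNorm _).trans (mul_le_mul_of_nonneg_right ha (norm_nonneg _))
  simpa using hdiff.add hgw

end WeakLimits

section EvalFunctionals

variable {X Y : Type*} [NormedAddCommGroup X] [NormedSpace ℝ X]
  [NormedAddCommGroup Y] [NormedSpace ℝ Y]

noncomputable def evalFunctional (x : X) (y : StrongDual ℝ Y) : StrongDual ℝ (X →L[ℝ] Y) :=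
  y.comp (ContinuousLinearMap.apply ℝ Y x)

@[simp]
theorem evalFunctional_apply (x : X) (y : StrongDual ℝ Y) (S : X →L[ℝ] Y) :
    evalFunctional x y S = y (S x) :=
  rfl

theorem norm_evalFunctional_le (x : X) (y : StrongDual ℝ Y) :
    ‖evalFunctional x y‖ ≤ ‖y‖ * ‖x‖ :=
  ContinuousLinearMap.opNorm_le_bound _ (by positivity) fun S =>
    calc ‖y (S x)‖ ≤ ‖y‖ * (‖S‖ * ‖x‖) := (y.le_opNorm _).trans (by gcongr; exact S.le_opNorm x)
      _ = ‖y‖ * ‖x‖ * ‖S‖ := by ring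

theorem norm_evalFunctional_le_one {x : X} {y : StrongDual ℝ Y} (hx : x ∈ closedBall 0 1)
    (hy : y ∈ closedBall 0 1) : ‖evalFunctional x y‖ ≤ 1 :=
  (norm_evalFunctional_le x y).trans
    (mul_le_one₀ (mem_closedBall_zero_iff.1 hy) (norm_nonneg x) (mem_closedBall_zero_iff.1 hx))

variable (X Y) in
noncomputable def evalFunctionals : Set (WeakDual ℝ (X →L[ℝ] Y)) :=
  (fun p : X × StrongDual ℝ Y => StrongDual.toWeakDual (evalFunctional p.1 p.2)) ''
    (closedBall 0 1 ×ˢ closedBall 0 1)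

theorem closure_evalFunctionals_subset_closedBall :
    closure (evalFunctionals X Y) ⊆ WeakDual.toStrongDual ⁻¹' closedBall 0 1 :=
  closure_minimal (fun _ ⟨_, ⟨hx, hy⟩, he⟩ => he ▸
      (mem_closedBall_zero_iff (E := StrongDual ℝ (X →L[ℝ] Y))).2
        (norm_evalFunctional_le_one hx hy))
    (WeakDual.isClosed_closedBall 0 1)

theorem norm_le_one_of_mem_closure_evalFunctionals {e : WeakDual ℝ (X →L[ℝ] Y)}
    (he : e ∈ closure (evalFunctionals X Y)) : ‖WeakDual.toStrongDual e‖ ≤ 1 :=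
  (mem_closedBall_zero_iff (E := StrongDual ℝ (X →L[ℝ] Y))).1
    (closure_evalFunctionals_subset_closedBall he)

theorem isCompact_closure_evalFunctionals : IsCompact (closure (evalFunctionals X Y)) :=
  (WeakDual.isCompact_closedBall 0 1).of_isClosed_subset isClosed_closure
    closure_evalFunctionals_subset_closedBall

theorem exists_mem_evalFunctionals_lt_apply (S : X →L[ℝ] Y) {r : ℝ} (hr : r < ‖S‖) :
    ∃ e ∈ evalFunctionals X Y, r < e S := by
  obtain ⟨x, hx, hrx⟩ := S.exists_lt_apply_of_lt_opNorm hr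
  obtain ⟨y, hy, hyx⟩ := exists_dual_vector'' ℝ (S x)
  exact ⟨_, ⟨(x, y), ⟨by simpa using hx.le, by simpa using hy⟩, rfl⟩, by simpa [hyx] using hrx⟩

theorem exists_mem_closure_evalFunctionals_apply_eq_norm (S : X →L[ℝ] Y) :
    ∃ e ∈ closure (evalFunctionals X Y), e S = ‖S‖ := by
  obtain ⟨e, he, hmax⟩ := isCompact_closure_evalFunctionals.exists_isMaxOn
    ⟨_, subset_closure ⟨(0, 0), by simp, rfl⟩⟩ (WeakDual.eval_continuous S).continuousOn
  refine ⟨e, he, le_antisymm ?_ (le_of_forall_lt fun r hr => ?_)⟩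
  · exact StrongDual.apply_le_norm_of_norm_le_one (norm_le_one_of_mem_closure_evalFunctionals he) S
  · obtain ⟨e', he', hr'⟩ := exists_mem_evalFunctionals_lt_apply S hr
    exact hr'.trans_le (hmax (subset_closure he'))

theorem exists_forall_isCompactOperator_apply_eq_of_mem_closure
    (hrefl : Function.Surjective (inclusionInDoubleDual ℝ X))
    {e : WeakDual ℝ (X →L[ℝ] Y)} (he : e ∈ closure (evalFunctionals X Y)) :
    ∃ x ∈ closedBall (0 : X) 1, ∃ y ∈ closedBall (0 : StrongDual ℝ Y) 1,
      ∀ K : X →L[ℝ] Y, IsCompactOperator K → e K = y (K x) := by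
  set φ : X × StrongDual ℝ Y → WeakDual ℝ (X →L[ℝ] Y) :=
    fun p => StrongDual.toWeakDual (evalFunctional p.1 p.2)
  obtain ⟨U, hUE, hUe⟩ := mem_closure_iff_ultrafilter.1 he
  have hUE' : φ '' (closedBall 0 1 ×ˢ closedBall 0 1) ∈ U := hUE
  obtain ⟨V, hB, hVe⟩ : ∃ V : Ultrafilter (X × StrongDual ℝ Y),
      closedBall 0 1 ×ˢ closedBall 0 1 ∈ V ∧ Tendsto φ V (𝓝 e) := by
    refine ⟨_, Ultrafilter.ofComapInfPrincipal_mem hUE', ?_⟩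
    rwa [Tendsto, ← Ultrafilter.coe_map, Ultrafilter.ofComapInfPrincipal_eq_of_map]
  have hfst : closedBall 0 1 ∈ V.map Prod.fst :=
    Ultrafilter.mem_map.2 (mem_of_superset hB fun _ hp => hp.1)
  have hsnd : closedBall 0 1 ∈ V.map Prod.snd :=
    Ultrafilter.mem_map.2 (mem_of_superset hB fun _ hp => hp.2)
  obtain ⟨x, hx, hxlim⟩ :=
    (V.map Prod.fst).exists_forall_tendsto_apply_of_surjective_inclusionInDoubleDual hrefl hfst
  obtain ⟨y, hy, hylim⟩ := (V.map Prod.snd).exists_forall_tendsto_apply hsnd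
  refine ⟨x, hx, y, hy, fun K hK => tendsto_nhds_unique
    (((WeakDual.eval_continuous K).tendsto e).comp hVe) ?_⟩
  have hKx : Tendsto (fun p : X × StrongDual ℝ Y => K p.1) V (𝓝 (K x)) :=
    tendsto_map'_iff.1 (hK.tendsto_of_forall_tendsto_apply isBounded_closedBall hfst hxlim)
  exact tendsto_apply_of_norm_le_of_tendsto
    (mem_of_superset hB fun _ hp => mem_closedBall_zero_iff.1 hp.2)
    (tendsto_map'_iff.1 (hylim (K x))) hKx

end EvalFunctionals

section MIdeal

variable {X Y : Type*} [NormedAddCommGroup X] [NormedSpace ℝ X]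
  [NormedAddCommGroup Y] [NormedSpace ℝ Y]
  {P : StrongDual ℝ (X →L[ℝ] Y) →L[ℝ] StrongDual ℝ (X →L[ℝ] Y)}

theorem exists_eq_evalFunctional_of_mem_closure
    (hrefl : Function.Surjective (inclusionInDoubleDual ℝ X))
    (hP : IsLprojection (StrongDual ℝ (X →L[ℝ] Y)) P)
    (hPrange : Set.range ⇑P =
      {f : StrongDual ℝ (X →L[ℝ] Y) | ∀ K : X →L[ℝ] Y, IsCompactOperator ⇑K → f K = 0})
    {T K : X →L[ℝ] Y} (hK : IsCompactOperator K) (hTK : ‖T - K‖ < ‖T‖)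
    {e : WeakDual ℝ (X →L[ℝ] Y)} (he : e ∈ closure (evalFunctionals X Y)) (heT : e T = ‖T‖) :
    ∃ x ∈ closedBall (0 : X) 1, ∃ y ∈ closedBall (0 : StrongDual ℝ Y) 1,
      WeakDual.toStrongDual e = evalFunctional x y := by
  have he₁ := norm_le_one_of_mem_closure_evalFunctionals he
  have hPK : ∀ f, P f K = 0 := fun f => by
    have hf : P f ∈ Set.range P := Set.mem_range_self f
    rw [hPrange] at hf
    exact hf K hK
  have hPe := hP.apply_eq_zero_of_apply_eq_norm hPK hTK he₁ heT
  obtain ⟨x, hx, y, hy, hxy⟩ := exists_forall_isCompactOperator_apply_eq_of_mem_closure hrefl he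
  have hsub : evalFunctional x y - WeakDual.toStrongDual e ∈ Set.range P := by
    rw [hPrange]
    intro K' hK'
    simp [← hxy K' hK']
  have hsplit := hP.norm_eq_norm_sub_add_norm hPe hsub
  have hxy₁ := norm_evalFunctional_le_one hx hy
  have he₁' : 1 ≤ ‖WeakDual.toStrongDual e‖ := by
    refine le_of_mul_le_mul_right ?_ ((norm_nonneg _).trans_lt hTK)
    rw [one_mul]
    exact heT.symm.le.trans (StrongDual.apply_le_norm_mul_norm _ T)
  refine ⟨x, hx, y, hy, (sub_eq_zero.1 (norm_le_zero_iff.1 ?_)).symm⟩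
  linarith

theorem exists_norm_eq_one_forall_nonneg_norm_le_norm_add_smul
    (hrefl : Function.Surjective (inclusionInDoubleDual ℝ X))
    (hP : IsLprojection (StrongDual ℝ (X →L[ℝ] Y)) P)
    (hPrange : Set.range ⇑P =
      {f : StrongDual ℝ (X →L[ℝ] Y) | ∀ K : X →L[ℝ] Y, IsCompactOperator ⇑K → f K = 0})
    {T K : X →L[ℝ] Y} (hK : IsCompactOperator K) (hTK : ‖T - K‖ < ‖T‖) {A : X →L[ℝ] Y}
    (hTA : ∀ l ∈ Set.Ici (0 : ℝ), ‖T‖ ≤ ‖T + l • A‖) :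
    ∃ x : X, (‖x‖ = 1 ∧ ‖T x‖ = ‖T‖) ∧ ∀ l ∈ Set.Ici (0 : ℝ), ‖T x‖ ≤ ‖T x + l • A x‖ := by
  obtain ⟨e, he, heT, heA⟩ := exists_mem_apply_eq_norm_and_nonneg
    (C := closure (evalFunctionals X Y)) isCompact_closure_evalFunctionals
    (fun _ he => norm_le_one_of_mem_closure_evalFunctionals he)
    exists_mem_closure_evalFunctionals_apply_eq_norm hTA
  obtain ⟨x, hx, y, hy, hexy⟩ :=
    exists_eq_evalFunctional_of_mem_closure hrefl hP hPrange hK hTK he heT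
  rw [mem_closedBall_zero_iff] at hx hy
  have hyT : y (T x) = ‖T‖ := by rw [← evalFunctional_apply, ← hexy]; exact heT
  have hyA : 0 ≤ y (A x) := by rw [← evalFunctional_apply, ← hexy]; exact heA
  have hTx : ‖T‖ ≤ ‖T x‖ := hyT.symm.le.trans (StrongDual.apply_le_norm_of_norm_le_one hy _)
  have hTx' : ‖T x‖ ≤ ‖T‖ * ‖x‖ := T.le_opNorm x
  have hx₁ : ‖x‖ = 1 :=
    le_antisymm hx (le_of_mul_le_mul_left (by linarith) ((norm_nonneg _).trans_lt hTK))
  have hTx₁ : ‖T x‖ = ‖T‖ := le_antisymm (by simpa [hx₁] using hTx') hTx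
  exact ⟨x, ⟨hx₁, hTx₁⟩, fun l hl =>
    norm_le_norm_add_smul_of_apply_eq_norm hy (hyT.trans hTx₁.symm) hyA hl⟩

end MIdeal

section Connected

variable {Y : Type*} [NormedAddCommGroup Y] [NormedSpace ℝ Y]

theorem norm_le_max_norm_add_smul (u v : Y) {a b : ℝ} (ha : a < 0) (hb : 0 < b) :
    ‖u‖ ≤ max ‖u + a • v‖ ‖u + b • v‖ := by
  have hcomb : (b - a) • u = b • (u + a • v) - a • (u + b • v) := by
    rw [smul_add, smul_add, smul_smul, smul_smul, sub_smul, mul_comm]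
    abel
  have : (b - a) * ‖u‖ ≤ b * ‖u + a • v‖ + -a * ‖u + b • v‖ := by
    calc (b - a) * ‖u‖ = ‖(b - a) • u‖ := by rw [norm_smul, Real.norm_of_nonneg (by linarith)]
      _ ≤ ‖b • (u + a • v)‖ + ‖a • (u + b • v)‖ := hcomb ▸ norm_sub_le _ _
      _ = b * ‖u + a • v‖ + -a * ‖u + b • v‖ := by
        rw [norm_smul, norm_smul, Real.norm_of_nonneg hb.le, Real.norm_of_nonpos ha.le]
  nlinarith [le_max_left ‖u + a • v‖ ‖u + b • v‖, le_max_right ‖u + a • v‖ ‖u + b • v‖]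

theorem IsPreconnected.exists_forall_norm_le_norm_add_smul {W : Type*} [TopologicalSpace W]
    {f g : W → Y} (hf : Continuous f) (hg : Continuous g) {D : Set W} (hD : IsPreconnected D)
    (hpos : ∃ z ∈ D, ∀ l ∈ Set.Ici (0 : ℝ), ‖f z‖ ≤ ‖f z + l • g z‖)
    (hneg : ∃ z ∈ D, ∀ l ∈ Set.Iic (0 : ℝ), ‖f z‖ ≤ ‖f z + l • g z‖) :
    ∃ z ∈ D, ∀ l : ℝ, ‖f z‖ ≤ ‖f z + l • g z‖ := by
  by_contra! h
  set U : Set ℝ → Set W := fun s => {z | ∃ l ∈ s, ‖f z + l • g z‖ < ‖f z‖}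
  have hopen : ∀ s, IsOpen (U s) := fun s => by
    have : U s = ⋃ l ∈ s, {z | ‖f z + l • g z‖ < ‖f z‖} := by ext; simp [U]
    rw [this]
    exact isOpen_biUnion fun l _ => isOpen_lt (by fun_prop) (by fun_prop)
  have hcover : D ⊆ U (Set.Ioi 0) ∪ U (Set.Iio 0) := fun z hz => by
    obtain ⟨l, hl⟩ := h z hz
    rcases lt_trichotomy l 0 with hl0 | rfl | hl0
    · exact Or.inr ⟨l, hl0, hl⟩
    · simp at hl
    · exact Or.inl ⟨l, hl0, hl⟩
  have hU : ∀ s t, s ⊆ t → ∀ z, (∀ l ∈ t, ‖f z‖ ≤ ‖f z + l • g z‖) → z ∉ U s :=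
    fun s t hst z hz ⟨l, hl, hlt⟩ => (hz l (hst hl)).not_gt hlt
  obtain ⟨zpos, hzposD, hzpos⟩ := hpos
  obtain ⟨zneg, hznegD, hzneg⟩ := hneg
  obtain ⟨z, -, ⟨a, ha, hza⟩, ⟨b, hb, hzb⟩⟩ := hD _ _ (hopen _) (hopen _) hcover
    ⟨zneg, hznegD, (hcover hznegD).resolve_right (hU _ _ Set.Iio_subset_Iic_self zneg hzneg)⟩
    ⟨zpos, hzposD, (hcover hzposD).resolve_left (hU _ _ Set.Ioi_subset_Ici_self zpos hzpos)⟩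
  exact (norm_le_max_norm_add_smul (f z) (g z) hb ha).not_gt (max_lt hzb hza)

end Connected

theorem exists_mem_forall_norm_le_of_mem_union_neg {X Y : Type*} [NormedAddCommGroup X]
    [NormedSpace ℝ X] [NormedAddCommGroup Y] [NormedSpace ℝ Y] {T A : X →L[ℝ] Y} {D : Set X}
    {s : Set ℝ} {x : X} (hx : x ∈ D ∪ -D) (hxs : ∀ l ∈ s, ‖T x‖ ≤ ‖T x + l • A x‖) :
    ∃ z ∈ D, ∀ l ∈ s, ‖T z‖ ≤ ‖T z + l • A z‖ := by
  rcases hx with hx | hx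
  · exact ⟨x, hx, hxs⟩
  · refine ⟨-x, hx, fun l hl => ?_⟩
    simpa only [map_neg, norm_neg, smul_neg, ← neg_add] using hxs l hl

theorem BJ_orthogonality_Mideal_connected_general
    {X Y : Type*} [NormedAddCommGroup X] [NormedSpace ℝ X]
    [NormedAddCommGroup Y] [NormedSpace ℝ Y]
    (hrefl : Function.Surjective (NormedSpace.inclusionInDoubleDual ℝ X))
    (P : StrongDual ℝ (X →L[ℝ] Y) →L[ℝ] StrongDual ℝ (X →L[ℝ] Y))
    (hPidem : ∀ f, P (P f) = P f)
    (hPL : ∀ f, ‖f‖ = ‖P f‖ + ‖f - P f‖)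
    (hPrange : Set.range ⇑P =
      {f : StrongDual ℝ (X →L[ℝ] Y) | ∀ K : X →L[ℝ] Y, IsCompactOperator ⇑K → f K = 0})
    (T : X →L[ℝ] Y) (hT : ‖T‖ = 1)
    (hdist : Metric.infDist T {K : X →L[ℝ] Y | IsCompactOperator ⇑K} < 1)
    (D : Set X) (hDconn : IsConnected D)
    (hMT : {x : X | ‖x‖ = 1 ∧ ‖T x‖ = ‖T‖} = D ∪ (-D))
    (A : X →L[ℝ] Y) :
    (∀ l : ℝ, ‖T‖ ≤ ‖T + l • A‖) ↔
      ∃ x : X, (‖x‖ = 1 ∧ ‖T x‖ = ‖T‖) ∧ (∀ l : ℝ, ‖T x‖ ≤ ‖T x + l • A x‖) := by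
  constructor
  · intro hBJ
    have hP : IsLprojection (StrongDual ℝ (X →L[ℝ] Y)) P :=
      ⟨ContinuousLinearMap.ext hPidem, fun f => by simpa [sub_smul] using hPL f⟩
    obtain ⟨K, hK, hTK⟩ := (Metric.infDist_lt_iff ⟨0, isCompactOperator_zero⟩).1 hdist
    rw [← hT, dist_eq_norm] at hTK
    have hD : ∀ {s : Set ℝ} {x : X}, (‖x‖ = 1 ∧ ‖T x‖ = ‖T‖) →
        (∀ l ∈ s, ‖T x‖ ≤ ‖T x + l • A x‖) → ∃ z ∈ D, ∀ l ∈ s, ‖T z‖ ≤ ‖T z + l • A z‖ :=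
      fun hx => exists_mem_forall_norm_le_of_mem_union_neg (hMT ▸ hx)
    obtain ⟨xpos, hxpos, hxposA⟩ := exists_norm_eq_one_forall_nonneg_norm_le_norm_add_smul
      hrefl hP hPrange hK hTK fun l _ => hBJ l
    obtain ⟨xneg, hxneg, hxnegA⟩ := exists_norm_eq_one_forall_nonneg_norm_le_norm_add_smul
      (A := -A) hrefl hP hPrange hK hTK fun l _ => by simpa using hBJ (-l)
    obtain ⟨z, hzD, hz⟩ := hDconn.isPreconnected.exists_forall_norm_le_norm_add_smul
      T.continuous A.continuous (hD hxpos hxposA) (hD (s := Set.Iic 0) hxneg fun l hl => by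
        simpa using hxnegA (-l) (Set.mem_Ici.2 (neg_nonneg.2 hl)))
    have hzM : z ∈ {x : X | ‖x‖ = 1 ∧ ‖T x‖ = ‖T‖} := hMT ▸ Or.inl hzD
    exact ⟨z, hzM, hz⟩
  · rintro ⟨x, ⟨hx, hTx⟩, hxA⟩ l
    calc ‖T‖ = ‖T x‖ := hTx.symm
      _ ≤ ‖(T + l • A) x‖ := hxA l
      _ ≤ ‖T + l • A‖ := (T + l • A).unit_le_opNorm x hx.le

/-- **Theorem 8 (ii).** Under the hypotheses of Theorem 8 (i), if in addition
`M_T = D ∪ (-D)` for some closed connected subset `D` of the unit sphere of `X`,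
then `T ⊥_B A` iff there exists `x ∈ M_T` with `Tx ⊥_B Ax`. -/
theorem BJ_orthogonality_Mideal_connected
    {X Y : Type*} [NormedAddCommGroup X] [NormedSpace ℝ X] [CompleteSpace X]
    [NormedAddCommGroup Y] [NormedSpace ℝ Y] [CompleteSpace Y]
    (hrefl : Function.Surjective (NormedSpace.inclusionInDoubleDual ℝ X))
    (hdimX : 2 ≤ Module.rank ℝ X) (hdimY : 2 ≤ Module.rank ℝ Y)
    (P : StrongDual ℝ (X →L[ℝ] Y) →L[ℝ] StrongDual ℝ (X →L[ℝ] Y))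
    (hPidem : ∀ f, P (P f) = P f)
    (hPL : ∀ f, ‖f‖ = ‖P f‖ + ‖f - P f‖)
    (hPrange : Set.range ⇑P =
      {f : StrongDual ℝ (X →L[ℝ] Y) | ∀ K : X →L[ℝ] Y, IsCompactOperator ⇑K → f K = 0})
    (T : X →L[ℝ] Y) (hT : ‖T‖ = 1)
    (hdist : Metric.infDist T {K : X →L[ℝ] Y | IsCompactOperator ⇑K} < 1)
    (D : Set X) (hDclosed : IsClosed D) (hDconn : IsConnected D)
    (hDsphere : D ⊆ Metric.sphere (0 : X) 1)
    (hMT : {x : X | ‖x‖ = 1 ∧ ‖T x‖ = ‖T‖} = D ∪ (-D))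
    (A : X →L[ℝ] Y) :
    (∀ l : ℝ, ‖T‖ ≤ ‖T + l • A‖) ↔
      ∃ x : X, (‖x‖ = 1 ∧ ‖T x‖ = ‖T‖) ∧ (∀ l : ℝ, ‖T x‖ ≤ ‖T x + l • A x‖) :=
  BJ_orthogonality_Mideal_connected_general hrefl P hPidem hPL hPrange T hT hdist D hDconn hMT A
end

section
/- Let X be a real reflexive Banach space and Y a real Banach space, both of dimension at least 2. Suppose K(X,Y), the space of compact linear operators from X to Y, is an M-ideal in L(X,Y), the space of bounded linear operators from X to Y. Let T ∈ L(X,Y) with ‖T‖ = 1 and dist(T, K(X,Y)) < 1, suppose M_T = D ∪ (−D) where D is a closed connected subset of the unit sphere of X, and let ε ∈ [0,1). Then for any A ∈ L(X,Y), T ⊥_B^ε A if and only if there exists x ∈ M_T such that ‖Tx + λAx‖² ≥ ‖T‖² − 2ε‖T‖·‖λA‖ for all real λ. -/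
/-!
Normalise `‖T‖ = 1`. For `tₙ ↓ 0` pick almost norming pairs `(xₙ, yₙ)` of `T + tₙ A`; the
hypothesis `T ⊥_B^ε A` forces `yₙ (T xₙ) → 1` and `liminf yₙ (A xₙ) ≥ -ε‖A‖`. Along an
ultrafilter the functionals `C ↦ yₙ (C xₙ)` converge weak-* to some `F` with `F T = 1`, and by
reflexivity and Banach–Alaoglu `xₙ ⇀ x₀`, `yₙ ⇀* y₀`; compactness turns weak into norm
convergence, so `F = y₀ (· x₀)` on `K(X,Y)`. As `dist(T, K(X,Y)) < 1`, the L-projection kills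
`F`, and then `F` is the only functional of norm `≤ ‖F‖` with its restriction to the M-ideal
`K(X,Y)`; hence `F = y₀ (· x₀)`, which puts `x₀` in `M_T` with `‖T x₀ + t A x₀‖ ≥ 1 - εt‖A‖`
for `t ≥ 0`.

Doing this for `A` and `-A` gives points of `M_T` that are good on one ray each. The points
good on a fixed ray form a closed symmetric set, and by a convexity argument every point of
`M_T` is good on one of the two rays; connectedness of `D` then yields a point good on both.
-/

open Filter Topology Metric Set

section Dual

variable {ι E : Type*} [NormedAddCommGroup E] [NormedSpace ℝ E]

theorem StrongDual.exists_tendsto_ultrafilter (U : Ultrafilter ι) (f : ι → StrongDual ℝ E)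
    {r : ℝ} (hf : ∀ i, ‖f i‖ ≤ r) :
    ∃ g : StrongDual ℝ E, ‖g‖ ≤ r ∧ ∀ v, Tendsto (fun i => f i v) U (𝓝 (g v)) := by
  obtain ⟨g, hg, hlim⟩ :=
    (WeakDual.isCompact_closedBall (𝕜 := ℝ) (0 : StrongDual ℝ E) r).ultrafilter_le_nhds'
      (U.map (fun i => StrongDual.toWeakDual (f i)))
      (Ultrafilter.mem_map.2 (univ_mem' fun i => by simpa using hf i))
  refine ⟨WeakDual.toStrongDual g, by simpa using hg, fun v => ?_⟩
  exact ((WeakDual.eval_continuous v).tendsto g).comp hlim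

theorem exists_weak_tendsto_ultrafilter_of_surjective_inclusionInDoubleDual
    (hrefl : Function.Surjective (NormedSpace.inclusionInDoubleDual ℝ E))
    (U : Ultrafilter ι) (x : ι → E) {r : ℝ} (hx : ∀ i, ‖x i‖ ≤ r) :
    ∃ x₀ : E, ‖x₀‖ ≤ r ∧ ∀ g : StrongDual ℝ E, Tendsto (fun i => g (x i)) U (𝓝 (g x₀)) := by
  obtain ⟨Φ, hΦr, hΦ⟩ := StrongDual.exists_tendsto_ultrafilter U
    (fun i => NormedSpace.inclusionInDoubleDual ℝ E (x i)) (r := r)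
    (fun i => ((NormedSpace.inclusionInDoubleDualLi ℝ).norm_map (x i)).le.trans (hx i))
  obtain ⟨x₀, rfl⟩ := hrefl Φ
  exact ⟨x₀, ((NormedSpace.inclusionInDoubleDualLi ℝ).norm_map x₀).symm.le.trans hΦr, hΦ⟩

theorem tendsto_apply_of_tendsto_of_norm_le {l : Filter ι} {f : ι → StrongDual ℝ E}
    {g : StrongDual ℝ E} {r : ℝ} (hf : ∀ i, ‖f i‖ ≤ r)
    (hfg : ∀ v, Tendsto (fun i => f i v) l (𝓝 (g v))) {v : ι → E} {v₀ : E}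
    (hv : Tendsto v l (𝓝 v₀)) : Tendsto (fun i => f i (v i)) l (𝓝 (g v₀)) := by
  have hsmall : Tendsto (fun i => f i (v i - v₀)) l (𝓝 0) := by
    refine squeeze_zero_norm (fun i => (f i).le_opNorm _ |>.trans ?_)
      (by simpa using (tendsto_iff_norm_sub_tendsto_zero.1 hv).const_mul r)
    exact mul_le_mul_of_nonneg_right (hf i) (norm_nonneg _)
  simpa using hsmall.add (hfg v₀)

theorem StrongDual.apply_le_norm {y : StrongDual ℝ E} (hy : ‖y‖ ≤ 1) (v : E) : y v ≤ ‖v‖ :=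
  (Real.le_norm_self _).trans (y.le_of_opNorm_le hy v |>.trans_eq (one_mul _))

end Dual

section Operators

variable {ι X Y : Type*} [NormedAddCommGroup X] [NormedSpace ℝ X]
  [NormedAddCommGroup Y] [NormedSpace ℝ Y]

theorem IsCompactOperator.tendsto_apply_of_weak_tendsto {S : X →L[ℝ] Y}
    (hS : IsCompactOperator S) (U : Ultrafilter ι) {x : ι → X} {r : ℝ} (hx : ∀ i, ‖x i‖ ≤ r)
    {x₀ : X} (hweak : ∀ g : StrongDual ℝ X, Tendsto (fun i => g (x i)) U (𝓝 (g x₀))) :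
    Tendsto (fun i => S (x i)) U (𝓝 (S x₀)) := by
  have hK : IsCompact (closure (S '' closedBall 0 r)) :=
    (show IsCompactOperator (S : X →ₗ[ℝ] Y) from hS).isCompact_closure_image_of_bounded
      isBounded_closedBall
  obtain ⟨z, -, hz⟩ := hK.ultrafilter_le_nhds' (U.map fun i => S (x i))
    (Ultrafilter.mem_map.2 (univ_mem' fun i =>
      subset_closure ⟨x i, mem_closedBall_zero_iff.2 (hx i), rfl⟩))
  have hzS : z = S x₀ := SeparatingDual.eq_iff_forall_dual_eq.2 fun g =>
    tendsto_nhds_unique (((g.continuous.tendsto z).comp hz)) (hweak (g ∘L S))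
  rw [← hzS]
  exact hz

theorem norm_comp_apply_le (y : StrongDual ℝ Y) (x : X) :
    ‖y ∘L ContinuousLinearMap.apply ℝ Y x‖ ≤ ‖y‖ * ‖x‖ :=
  ContinuousLinearMap.opNorm_le_bound _ (by positivity) fun C =>
    calc ‖y (C x)‖ ≤ ‖y‖ * ‖C x‖ := y.le_opNorm _
      _ ≤ ‖y‖ * (‖C‖ * ‖x‖) := by gcongr; exact C.le_opNorm x
      _ = ‖y‖ * ‖x‖ * ‖C‖ := by ring

theorem exists_tendsto_ultrafilter_dual_apply_apply
    (hrefl : Function.Surjective (NormedSpace.inclusionInDoubleDual ℝ X))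
    (U : Ultrafilter ι) {x : ι → X} {y : ι → StrongDual ℝ Y}
    (hx : ∀ i, ‖x i‖ ≤ 1) (hy : ∀ i, ‖y i‖ ≤ 1) :
    ∃ (F : StrongDual ℝ (X →L[ℝ] Y)) (x₀ : X) (y₀ : StrongDual ℝ Y),
      ‖F‖ ≤ 1 ∧ ‖x₀‖ ≤ 1 ∧ ‖y₀‖ ≤ 1 ∧
      (∀ C, Tendsto (fun i => y i (C (x i))) U (𝓝 (F C))) ∧
      ∀ S : X →L[ℝ] Y, IsCompactOperator S → F S = y₀ (S x₀) := by
  obtain ⟨F, hF, hFlim⟩ := StrongDual.exists_tendsto_ultrafilter U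
    (fun i => y i ∘L ContinuousLinearMap.apply ℝ Y (x i)) (r := 1)
    fun i => (norm_comp_apply_le _ _).trans (mul_le_one₀ (hy i) (norm_nonneg _) (hx i))
  obtain ⟨x₀, hx₀, hxlim⟩ :=
    exists_weak_tendsto_ultrafilter_of_surjective_inclusionInDoubleDual hrefl U x hx
  obtain ⟨y₀, hy₀, hylim⟩ := StrongDual.exists_tendsto_ultrafilter U y hy
  refine ⟨F, x₀, y₀, hF, hx₀, hy₀, hFlim, fun S hS => tendsto_nhds_unique (hFlim S) ?_⟩
  exact tendsto_apply_of_tendsto_of_norm_le hy hylim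
    (hS.tendsto_apply_of_weak_tendsto U hx hxlim)

theorem ContinuousLinearMap.exists_dual_apply_gt_opNorm_sub (B : X →L[ℝ] Y) {δ : ℝ}
    (hδ : 0 < δ) : ∃ (x : X) (y : StrongDual ℝ Y), ‖x‖ ≤ 1 ∧ ‖y‖ ≤ 1 ∧ ‖B‖ - δ < y (B x) := by
  obtain ⟨x, hx, hBx⟩ := B.exists_lt_apply_of_lt_opNorm (sub_lt_self ‖B‖ hδ)
  obtain ⟨y, hy, hyBx⟩ := exists_dual_vector'' ℝ (B x)
  exact ⟨x, y, hx.le, hy, hyBx ▸ hBx⟩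

end Operators

theorem tendsto_sqrt_one_sub_slope (c : ℝ) :
    Tendsto (fun t => (√(1 - 2 * c * t) - 1) / t) (𝓝[>] 0) (𝓝 (-c)) := by
  have hderiv : HasDerivAt (fun t => √(1 - 2 * c * t)) (-c) 0 := by
    have h := (((hasDerivAt_id (0 : ℝ)).const_mul (2 * c)).const_sub 1).sqrt (by simp)
    simp only [id, mul_one, mul_zero, sub_zero, Real.sqrt_one] at h
    convert h using 1
    ring
  simpa [div_eq_inv_mul] using hderiv.tendsto_slope_zero_right

section LProjection

variable {Z : Type*} [NormedAddCommGroup Z] [NormedSpace ℝ Z]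

theorem StrongDual.apply_le_norm_mul_infDist {J : Set Z} (hJ : J.Nonempty)
    {f : StrongDual ℝ Z} (hf : ∀ K ∈ J, f K = 0) (T : Z) : f T ≤ ‖f‖ * infDist T J := by
  rcases (norm_nonneg f).eq_or_lt with hf0 | hfpos
  · simp [(ContinuousLinearMap.opNorm_zero_iff f).1 hf0.symm]
  rw [← div_le_iff₀' hfpos, le_infDist hJ]
  intro K hK
  rw [div_le_iff₀' hfpos, dist_eq_norm]
  calc f T = f (T - K) := by rw [map_sub, hf K hK, sub_zero]
    _ ≤ ‖f (T - K)‖ := Real.le_norm_self _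
    _ ≤ ‖f‖ * ‖T - K‖ := f.le_opNorm _

variable {J : Set Z} {P : StrongDual ℝ Z →L[ℝ] StrongDual ℝ Z}

theorem lProjection_apply_eq_zero (hPL : ∀ f, ‖f‖ = ‖P f‖ + ‖f - P f‖)
    (hPrange : range P = {f | ∀ K ∈ J, f K = 0}) (hJ : J.Nonempty) {T : Z} (hT : ‖T‖ ≤ 1)
    (hdist : infDist T J < 1) {F : StrongDual ℝ Z} (hF : ‖F‖ ≤ 1) (hFT : F T = 1) :
    P F = 0 := by
  have hPF : P F T ≤ ‖P F‖ * infDist T J :=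
    StrongDual.apply_le_norm_mul_infDist hJ (hPrange.subset (mem_range_self F)) T
  have hcompl : (F - P F) T ≤ ‖F - P F‖ :=
    (Real.le_norm_self _).trans ((F - P F).le_opNorm_of_le hT |>.trans_eq (mul_one _))
  have hsplit : F T = P F T + (F - P F) T := by simp
  have hL := hPL F
  have hsmall : ‖P F‖ * (1 - infDist T J) ≤ 0 := by nlinarith
  exact norm_le_zero_iff.1 (nonpos_of_mul_nonpos_left hsmall (by linarith))

theorem eq_of_lProjection_eq_zero (hPidem : ∀ f, P (P f) = P f)
    (hPL : ∀ f, ‖f‖ = ‖P f‖ + ‖f - P f‖) (hPrange : range P = {f | ∀ K ∈ J, f K = 0})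
    {F G : StrongDual ℝ Z} (hPF : P F = 0) (hGF : ‖G‖ ≤ ‖F‖) (hJ : ∀ K ∈ J, G K = F K) :
    G = F := by
  have hPG : ∀ K ∈ J, P G K = 0 := hPrange.subset (mem_range_self G)
  obtain ⟨w, hw⟩ : G - P G - F ∈ range P :=
    hPrange.superset fun K hK => by simp [hJ K hK, hPG K hK]
  have hGPG : G - P G = F := sub_eq_zero.1 <|
    calc G - P G - F = P (G - P G - F) := by rw [← hw, hPidem]
      _ = 0 := by simp [hPidem, hPF]
  have hPG0 : P G = 0 := norm_le_zero_iff.1 (by linarith [hPL G, hGPG ▸ hGF])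
  simpa [hPG0] using hGPG

end LProjection

section NormingFunctional

variable {X Y : Type*} [NormedAddCommGroup X] [NormedSpace ℝ X]
  [NormedAddCommGroup Y] [NormedSpace ℝ Y]

theorem exists_norming_pair_of_le_norm_add_smul_sq {T A : X →L[ℝ] Y} (hT : ‖T‖ ≤ 1)
    {ε t : ℝ} (ht : 0 < t) (hBJ : 1 - 2 * ε * t * ‖A‖ ≤ ‖T + t • A‖ ^ 2) :
    ∃ (x : X) (y : StrongDual ℝ Y), ‖x‖ ≤ 1 ∧ ‖y‖ ≤ 1 ∧
      √(1 - 2 * ε * t * ‖A‖) - t ^ 2 - t * ‖A‖ ≤ y (T x) ∧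
      (√(1 - 2 * ε * t * ‖A‖) - 1) / t - t ≤ y (A x) := by
  obtain ⟨x, y, hx, hy, hnorming⟩ :=
    (T + t • A).exists_dual_apply_gt_opNorm_sub (pow_pos ht 2)
  have hsqrt : √(1 - 2 * ε * t * ‖A‖) ≤ ‖T + t • A‖ :=
    (Real.sqrt_le_sqrt hBJ).trans_eq (Real.sqrt_sq (norm_nonneg _))
  have hsplit : y ((T + t • A) x) = y (T x) + t * y (A x) := by simp
  have hTx : y (T x) ≤ 1 :=
    (y.apply_le_norm hy _).trans ((T.le_opNorm_of_le hx).trans (by simpa using hT))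
  have hAx : y (A x) ≤ ‖A‖ :=
    (y.apply_le_norm hy _).trans ((A.le_opNorm_of_le hx).trans_eq (mul_one _))
  refine ⟨x, y, hx, hy, ?_, ?_⟩
  · nlinarith
  · rw [sub_le_iff_le_add, div_le_iff₀ ht]
    nlinarith


theorem exists_functional_of_forall_le_norm_add_smul_sq
    (hrefl : Function.Surjective (NormedSpace.inclusionInDoubleDual ℝ X))
    {T A : X →L[ℝ] Y} (hT : ‖T‖ = 1) {ε : ℝ}
    (hBJ : ∀ t : ℝ, 0 ≤ t → 1 - 2 * ε * t * ‖A‖ ≤ ‖T + t • A‖ ^ 2) :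
    ∃ (F : StrongDual ℝ (X →L[ℝ] Y)) (x₀ : X) (y₀ : StrongDual ℝ Y),
      ‖F‖ ≤ 1 ∧ ‖x₀‖ ≤ 1 ∧ ‖y₀‖ ≤ 1 ∧ F T = 1 ∧ -(ε * ‖A‖) ≤ F A ∧
      ∀ S : X →L[ℝ] Y, IsCompactOperator S → F S = y₀ (S x₀) := by
  set t : ℕ → ℝ := fun n => 1 / (n + 1)
  have ht : ∀ n, 0 < t n := fun n => by positivity
  have ht0 : Tendsto t atTop (𝓝 0) := tendsto_one_div_add_atTop_nhds_zero_nat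
  choose x y hx hy hTx hAx using fun n =>
    exists_norming_pair_of_le_norm_add_smul_sq hT.le (ht n) (hBJ _ (ht n).le)
  have hU : (Ultrafilter.of (atTop : Filter ℕ) : Filter ℕ) ≤ atTop := Ultrafilter.of_le _
  obtain ⟨F, x₀, y₀, hF, hx₀, hy₀, hFlim, hFS⟩ :=
    exists_tendsto_ultrafilter_dual_apply_apply hrefl (Ultrafilter.of atTop) hx hy
  have hTlow :
      Tendsto (fun n => √(1 - 2 * ε * t n * ‖A‖) - t n ^ 2 - t n * ‖A‖) atTop (𝓝 1) := by
    have hsqrt : Tendsto (fun n => √(1 - 2 * ε * t n * ‖A‖)) atTop (𝓝 1) := by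
      simpa using ((ht0.const_mul (2 * ε)).mul_const ‖A‖).const_sub 1 |>.sqrt
    simpa using (hsqrt.sub (ht0.pow 2)).sub (ht0.mul_const ‖A‖)
  have hAlow : Tendsto (fun n => (√(1 - 2 * ε * t n * ‖A‖) - 1) / t n - t n) atTop
      (𝓝 (-(ε * ‖A‖))) := by
    have hslope := (tendsto_sqrt_one_sub_slope (ε * ‖A‖)).comp
      (tendsto_nhdsWithin_iff.2 ⟨ht0, Eventually.of_forall ht⟩)
    simpa [Function.comp_def, mul_assoc, mul_comm, mul_left_comm] using hslope.sub ht0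
  refine ⟨F, x₀, y₀, hF, hx₀, hy₀, le_antisymm ?_ ?_, ?_, hFS⟩
  · simpa [hT] using F.apply_le_norm hF T
  · exact le_of_tendsto_of_tendsto (hTlow.mono_left hU) (hFlim T) (Eventually.of_forall hTx)
  · exact le_of_tendsto_of_tendsto (hAlow.mono_left hU) (hFlim A) (Eventually.of_forall hAx)

/-- A one-sided, linearised form of `‖T x + λ • A x‖ ^ 2 ≥ 1 - 2 ε ‖λ • A‖` (case `‖T‖ = 1`). -/
def ApproxOrthogonalOnRay (T A : X →L[ℝ] Y) (ε : ℝ) (x : X) : Prop :=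
  ∀ t : ℝ, 0 ≤ t → 1 - ε * t * ‖A‖ ≤ ‖T x + t • A x‖

theorem exists_approxOrthogonalOnRay_of_lProjection
    (hrefl : Function.Surjective (NormedSpace.inclusionInDoubleDual ℝ X))
    {P : StrongDual ℝ (X →L[ℝ] Y) →L[ℝ] StrongDual ℝ (X →L[ℝ] Y)}
    (hPidem : ∀ f, P (P f) = P f) (hPL : ∀ f, ‖f‖ = ‖P f‖ + ‖f - P f‖)
    (hPrange : range P =
      {f : StrongDual ℝ (X →L[ℝ] Y) | ∀ K : X →L[ℝ] Y, IsCompactOperator K → f K = 0})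
    {T A : X →L[ℝ] Y} (hT : ‖T‖ = 1)
    (hdist : infDist T {K : X →L[ℝ] Y | IsCompactOperator K} < 1)
    {ε : ℝ} (hBJ : ∀ t : ℝ, 0 ≤ t → 1 - 2 * ε * t * ‖A‖ ≤ ‖T + t • A‖ ^ 2) :
    ∃ x : X, ‖x‖ = 1 ∧ ‖T x‖ = 1 ∧ ApproxOrthogonalOnRay T A ε x := by
  obtain ⟨F, x₀, y₀, hF, hx₀, hy₀, hFT, hFA, hFS⟩ :=
    exists_functional_of_forall_le_norm_add_smul_sq hrefl hT hBJ
  have hPF : P F = 0 :=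
    lProjection_apply_eq_zero hPL hPrange ⟨0, isCompactOperator_zero⟩ hT.le hdist hF hFT
  have hFnorm : 1 ≤ ‖F‖ := by simpa [hFT, hT] using F.le_opNorm T
  have hGF : y₀ ∘L ContinuousLinearMap.apply ℝ Y x₀ = F :=
    eq_of_lProjection_eq_zero hPidem hPL hPrange hPF
      ((norm_comp_apply_le y₀ x₀).trans ((mul_le_one₀ hy₀ (norm_nonneg _) hx₀).trans hFnorm))
      fun K hK => (hFS K hK).symm
  have hTx₀ : y₀ (T x₀) = 1 := by rw [← hFT, ← hGF]; rfl
  have hAx₀ : -(ε * ‖A‖) ≤ y₀ (A x₀) := by rw [← hGF] at hFA; exact hFA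
  have hTx₀_le : ‖T x₀‖ ≤ ‖x₀‖ := by simpa [hT] using T.le_opNorm x₀
  have hTx₀_ge : 1 ≤ ‖T x₀‖ := hTx₀ ▸ y₀.apply_le_norm hy₀ _
  refine ⟨x₀, by linarith, by linarith, fun t ht => ?_⟩
  calc 1 - ε * t * ‖A‖ ≤ y₀ (T x₀ + t • A x₀) := by
        rw [map_add, map_smul, hTx₀, smul_eq_mul]; nlinarith
    _ ≤ ‖T x₀ + t • A x₀‖ := y₀.apply_le_norm hy₀ _

end NormingFunctional

section Ray

variable {X Y : Type*} [NormedAddCommGroup X] [NormedSpace ℝ X]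
  [NormedAddCommGroup Y] [NormedSpace ℝ Y] {T A : X →L[ℝ] Y} {ε : ℝ}

theorem approxOrthogonalOnRay_neg_iff {x : X} :
    ApproxOrthogonalOnRay T A ε (-x) ↔ ApproxOrthogonalOnRay T A ε x := by
  simp only [ApproxOrthogonalOnRay, map_neg, smul_neg, ← neg_add, norm_neg]

theorem isClosed_setOf_approxOrthogonalOnRay :
    IsClosed {x : X | ApproxOrthogonalOnRay T A ε x} := by
  simp only [ApproxOrthogonalOnRay, ofPred_forall]
  exact isClosed_iInter fun t => isClosed_iInter fun _ =>
    isClosed_le continuous_const (by fun_prop)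

theorem approxOrthogonalOnRay_or_neg {z : X} (hz : ‖T z‖ = 1) (hε : 0 ≤ ε) :
    ApproxOrthogonalOnRay T A ε z ∨ ApproxOrthogonalOnRay T (-A) ε z := by
  by_contra! h
  simp only [ApproxOrthogonalOnRay, not_forall, not_le, norm_neg] at h
  obtain ⟨⟨s, hs, hlts⟩, ⟨r, hr, hltr⟩⟩ := h
  have hs : 0 < s := hs.lt_of_ne (by rintro rfl; simp [hz] at hlts)
  have hr : 0 < r := hr.lt_of_ne (by rintro rfl; simp [hz] at hltr)
  have hcomb : (s + r) • T z = r • (T z + s • A z) + s • (T z + r • (-A) z) := by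
    simp only [neg_apply]; module
  have : s + r < s + r := calc
    s + r = ‖(s + r) • T z‖ := by
      rw [norm_smul, hz, Real.norm_of_nonneg (by linarith), mul_one]
    _ ≤ r * ‖T z + s • A z‖ + s * ‖T z + r • (-A) z‖ := by
      rw [hcomb]
      refine (norm_add_le _ _).trans_eq ?_
      rw [norm_smul, norm_smul, Real.norm_of_nonneg hr.le, Real.norm_of_nonneg hs.le]
    _ < r * (1 - ε * s * ‖A‖) + s * (1 - ε * r * ‖A‖) := by gcongr
    _ ≤ s + r := by
      nlinarith [mul_nonneg (mul_nonneg hε (norm_nonneg A)) (mul_nonneg hr.le hs.le)]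
  exact lt_irrefl _ this

theorem le_norm_add_smul_sq_of_approxOrthogonalOnRay {x : X}
    (hfwd : ApproxOrthogonalOnRay T A ε x) (hbwd : ApproxOrthogonalOnRay T (-A) ε x) (l : ℝ) :
    1 - 2 * ε * ‖l • A‖ ≤ ‖T x + l • A x‖ ^ 2 := by
  have hlin : 1 - ε * |l| * ‖A‖ ≤ ‖T x + l • A x‖ := by
    rcases le_or_gt 0 l with hl | hl
    · simpa [abs_of_nonneg hl] using hfwd l hl
    · simpa [abs_of_neg hl] using hbwd (-l) (by linarith)
  rw [norm_smul, Real.norm_eq_abs]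
  rcases le_or_gt (ε * |l| * ‖A‖) 1 with hu | hu
  · nlinarith [sq_nonneg (ε * |l| * ‖A‖)]
  · nlinarith [sq_nonneg ‖T x + l • A x‖]

theorem exists_approxOrthogonalOnRay_both_of_isPreconnected {D : Set X}
    (hD : IsPreconnected D) (hDT : ∀ z ∈ D, ‖T z‖ = 1) (hε : 0 ≤ ε)
    (hfwd : ∃ x ∈ D ∪ -D, ApproxOrthogonalOnRay T A ε x)
    (hbwd : ∃ x ∈ D ∪ -D, ApproxOrthogonalOnRay T (-A) ε x) :
    ∃ z ∈ D, ApproxOrthogonalOnRay T A ε z ∧ ApproxOrthogonalOnRay T (-A) ε z := by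
  have hmeet : ∀ {B : X →L[ℝ] Y}, (∃ x ∈ D ∪ -D, ApproxOrthogonalOnRay T B ε x) →
      (D ∩ {x | ApproxOrthogonalOnRay T B ε x}).Nonempty := by
    rintro B ⟨x, hx | hx, hxB⟩
    · exact ⟨x, hx, hxB⟩
    · exact ⟨-x, hx, approxOrthogonalOnRay_neg_iff.2 hxB⟩
  obtain ⟨z, hzD, hzfwd, hzbwd⟩ := isPreconnected_closed_iff.1 hD _ _
    isClosed_setOf_approxOrthogonalOnRay isClosed_setOf_approxOrthogonalOnRay
    (fun z hz => approxOrthogonalOnRay_or_neg (hDT z hz) hε) (hmeet hfwd) (hmeet hbwd)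
  exact ⟨z, hzD, hzfwd, hzbwd⟩

end Ray

theorem approx_BJ_orthogonality_Mideal_connected_general
    {X Y : Type*} [NormedAddCommGroup X] [NormedSpace ℝ X]
    [NormedAddCommGroup Y] [NormedSpace ℝ Y]
    (hrefl : Function.Surjective (NormedSpace.inclusionInDoubleDual ℝ X))
    (P : StrongDual ℝ (X →L[ℝ] Y) →L[ℝ] StrongDual ℝ (X →L[ℝ] Y))
    (hPidem : ∀ f, P (P f) = P f)
    (hPL : ∀ f, ‖f‖ = ‖P f‖ + ‖f - P f‖)
    (hPrange : Set.range ⇑P =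
      {f : StrongDual ℝ (X →L[ℝ] Y) | ∀ K : X →L[ℝ] Y, IsCompactOperator ⇑K → f K = 0})
    (T : X →L[ℝ] Y) (hT : ‖T‖ = 1)
    (hdist : Metric.infDist T {K : X →L[ℝ] Y | IsCompactOperator ⇑K} < 1)
    (D : Set X) (hDconn : IsConnected D)
    (hMT : {x : X | ‖x‖ = 1 ∧ ‖T x‖ = ‖T‖} = D ∪ (-D))
    (ε : ℝ) (hε : ε ∈ Set.Ico (0 : ℝ) 1) (A : X →L[ℝ] Y) :
    (∀ l : ℝ, ‖T‖ ^ 2 - 2 * ε * ‖T‖ * ‖l • A‖ ≤ ‖T + l • A‖ ^ 2) ↔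
      ∃ x : X, (‖x‖ = 1 ∧ ‖T x‖ = ‖T‖) ∧
        (∀ l : ℝ, ‖T‖ ^ 2 - 2 * ε * ‖T‖ * ‖l • A‖ ≤ ‖T x + l • A x‖ ^ 2) := by
  constructor
  · intro hBJ
    have hray : ∀ B : X →L[ℝ] Y,
        (∀ l : ℝ, ‖T‖ ^ 2 - 2 * ε * ‖T‖ * ‖l • B‖ ≤ ‖T + l • B‖ ^ 2) →
        ∃ x ∈ D ∪ -D, ApproxOrthogonalOnRay T B ε x := by
      intro B hB
      obtain ⟨x, hx, hTx, hxB⟩ := exists_approxOrthogonalOnRay_of_lProjection hrefl hPidem hPL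
        hPrange hT hdist fun t ht => by
          simpa [hT, norm_smul, abs_of_nonneg ht, mul_assoc] using hB t
      exact ⟨x, hMT.subset ⟨hx, hT ▸ hTx⟩, hxB⟩
    obtain ⟨z, hzD, hzfwd, hzbwd⟩ := exists_approxOrthogonalOnRay_both_of_isPreconnected
      hDconn.isPreconnected (fun z hz => (hMT.superset (Or.inl hz)).2.trans hT) hε.1
      (hray A hBJ) (hray (-A) fun l => by simpa using hBJ (-l))
    exact ⟨z, hMT.superset (Or.inl hzD), by simpa [hT] using
      le_norm_add_smul_sq_of_approxOrthogonalOnRay hzfwd hzbwd⟩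
  · rintro ⟨x, ⟨hx, -⟩, hineq⟩ l
    exact (hineq l).trans (pow_le_pow_left₀ (norm_nonneg _)
      (by simpa [hx] using (T + l • A).le_opNorm x) 2)

/-- **Theorem 9 (ii).** Under the M-ideal hypotheses, `‖T‖ = 1`,
`dist(T, K(X,Y)) < 1`, `M_T = D ∪ (-D)` with `D` a closed connected subset of the
unit sphere, and `ε ∈ [0,1)`:  `T ⊥_B^ε A` iff there exists `x ∈ M_T` with
`‖Tx + λAx‖² ≥ ‖T‖² - 2ε‖T‖‖λA‖` for all real `λ`. -/
theorem approx_BJ_orthogonality_Mideal_connected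
    {X Y : Type*} [NormedAddCommGroup X] [NormedSpace ℝ X] [CompleteSpace X]
    [NormedAddCommGroup Y] [NormedSpace ℝ Y] [CompleteSpace Y]
    (hrefl : Function.Surjective (NormedSpace.inclusionInDoubleDual ℝ X))
    (hdimX : 2 ≤ Module.rank ℝ X) (hdimY : 2 ≤ Module.rank ℝ Y)
    (P : StrongDual ℝ (X →L[ℝ] Y) →L[ℝ] StrongDual ℝ (X →L[ℝ] Y))
    (hPidem : ∀ f, P (P f) = P f)
    (hPL : ∀ f, ‖f‖ = ‖P f‖ + ‖f - P f‖)
    (hPrange : Set.range ⇑P =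
      {f : StrongDual ℝ (X →L[ℝ] Y) | ∀ K : X →L[ℝ] Y, IsCompactOperator ⇑K → f K = 0})
    (T : X →L[ℝ] Y) (hT : ‖T‖ = 1)
    (hdist : Metric.infDist T {K : X →L[ℝ] Y | IsCompactOperator ⇑K} < 1)
    (D : Set X) (hDclosed : IsClosed D) (hDconn : IsConnected D)
    (hDsphere : D ⊆ Metric.sphere (0 : X) 1)
    (hMT : {x : X | ‖x‖ = 1 ∧ ‖T x‖ = ‖T‖} = D ∪ (-D))
    (ε : ℝ) (hε : ε ∈ Set.Ico (0 : ℝ) 1) (A : X →L[ℝ] Y) :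
    (∀ l : ℝ, ‖T‖ ^ 2 - 2 * ε * ‖T‖ * ‖l • A‖ ≤ ‖T + l • A‖ ^ 2) ↔
      ∃ x : X, (‖x‖ = 1 ∧ ‖T x‖ = ‖T‖) ∧
        (∀ l : ℝ, ‖T‖ ^ 2 - 2 * ε * ‖T‖ * ‖l • A‖ ≤ ‖T x + l • A x‖ ^ 2) :=
  approx_BJ_orthogonality_Mideal_connected_general hrefl P hPidem hPL hPrange T hT hdist D hDconn
    hMT ε hε A
end

section
/- Let X and Y be real normed linear spaces of dimension at least 2, and let T be a bounded linear operator from X to Y whose norm attainment set is M_T = {x₀, −x₀} for some x₀ ∈ X with ‖x₀‖ = 1. Suppose P is an L-projection on X whose range is span{x₀}. Then T is a smooth point of the space of bounded linear operators from X to Y if and only if (i) Tx₀ is a smooth point of Y, and (ii) the restriction of T to ker(P) has norm strictly less than ‖T‖. -/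
/-!
Since `P` is an L-projection onto `ℝ x₀`, every operator satisfies
`‖S‖ ≤ max ‖S x₀‖ ‖S|_{ker P}‖`. If `‖T|_{ker P}‖ < ‖T‖` and `R x₀ = 0`, then `‖T + t • R‖ ≤ ‖T‖`
for small `t`, so every norming functional of `T` vanishes at `R`; such a functional factors as
`g ∘ (S ↦ S x₀)` with `g` norming `T x₀`, and smoothness of `T` reduces to that of `T x₀`.
If instead `‖T|_{ker P}‖ = ‖T‖`, a norming functional of `T ∘ (1 - P)`, pulled back along
`S ↦ S ∘ (1 - P)`, norms `T` but vanishes at `T ∘ P`, unlike the functionals coming from `T x₀`.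
-/

open ContinuousLinearMap Filter Topology

section NormingFunctional

variable {E : Type*} [NormedAddCommGroup E] [NormedSpace ℝ E]

def IsNormingFunctional (f : StrongDual ℝ E) (z : E) : Prop :=
  ‖f‖ = 1 ∧ f z = ‖z‖

theorem IsNormingFunctional.of_norm_le_one {f : StrongDual ℝ E} {z : E} (hf : ‖f‖ ≤ 1)
    (hfz : f z = ‖z‖) (hz : z ≠ 0) : IsNormingFunctional f z := by
  refine ⟨le_antisymm hf ?_, hfz⟩
  have : ‖z‖ ≤ ‖f‖ * ‖z‖ := by
    calc ‖z‖ = f z := hfz.symm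
      _ ≤ ‖f‖ * ‖z‖ := (le_abs_self (f z)).trans (f.le_opNorm z)
  exact le_of_mul_le_mul_right (by rwa [one_mul]) (norm_pos_iff.mpr hz)

theorem exists_isNormingFunctional {z : E} (hz : z ≠ 0) :
    ∃ f : StrongDual ℝ E, IsNormingFunctional f z :=
  exists_dual_vector ℝ z (norm_ne_zero_iff.mpr hz)

theorem ne_zero_of_existsUnique_isNormingFunctional {z : E}
    (h : ∃! f : StrongDual ℝ E, IsNormingFunctional f z) : z ≠ 0 := by
  rintro rfl
  obtain ⟨f, ⟨hf, -⟩, huniq⟩ := h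
  have hneg : -f = f := huniq (-f) ⟨by rw [norm_neg, hf], by simp⟩
  have : f = 0 := by
    ext x
    have hx : -f x = f x := congr($hneg x)
    rw [zero_apply]
    linarith
  simp [this] at hf

theorem apply_eq_zero_of_isLocalMax (f : StrongDual ℝ E) {T R : E}
    (h : IsLocalMax (fun t : ℝ => f (T + t • R)) 0) : f R = 0 := by
  refine h.hasDerivAt_eq_zero ?_
  have : HasDerivAt (fun t : ℝ => T + t • R) R 0 := by
    simpa using ((hasDerivAt_id (0 : ℝ)).smul_const R).const_add T
  exact f.hasFDerivAt.comp_hasDerivAt (0 : ℝ) this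

end NormingFunctional

section Evaluation

variable {X Y : Type*} [NormedAddCommGroup X] [NormedSpace ℝ X]
  [NormedAddCommGroup Y] [NormedSpace ℝ Y] {x₀ : X}

theorem norm_apply_le (x : X) : ‖apply ℝ Y x‖ ≤ ‖x‖ :=
  opNorm_le_bound _ (norm_nonneg x) fun S => by
    simpa [mul_comm] using S.le_opNorm x

theorem comp_apply_injective (hx₀ : x₀ ≠ 0) :
    Function.Injective fun g : StrongDual ℝ Y => g.comp (apply ℝ Y x₀) := by
  obtain ⟨φ, -, hφ⟩ := exists_dual_vector ℝ x₀ (norm_ne_zero_iff.mpr hx₀)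
  intro g₁ g₂ h
  ext y
  have := congr($h ((‖x₀‖⁻¹ • φ).smulRight y))
  simpa [hφ, norm_ne_zero_iff.mpr hx₀] using this

theorem exists_eq_comp_apply (hx₀ : ‖x₀‖ = 1) (f : StrongDual ℝ (X →L[ℝ] Y))
    (hf : ∀ R : X →L[ℝ] Y, R x₀ = 0 → f R = 0) :
    ∃ g : StrongDual ℝ Y, ‖g‖ ≤ ‖f‖ ∧ f = g.comp (apply ℝ Y x₀) := by
  obtain ⟨φ, hφ, hφx₀⟩ := exists_dual_vector ℝ x₀ (by rw [hx₀]; exact one_ne_zero)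
  rw [hx₀] at hφx₀
  refine ⟨f.comp (smulRightL ℝ X Y φ), ?_, ?_⟩
  · refine opNorm_le_bound _ (norm_nonneg f) fun y => ?_
    calc ‖f (φ.smulRight y)‖ ≤ ‖f‖ * ‖φ.smulRight y‖ := f.le_opNorm _
      _ = ‖f‖ * ‖y‖ := by rw [norm_smulRight_apply, hφ, one_mul]
  · ext S
    have h := hf (S - φ.smulRight (S x₀)) (by simp [hφx₀])
    rw [map_sub, sub_eq_zero] at h
    exact h

theorem IsNormingFunctional.comp_apply {T : X →L[ℝ] Y} {g : StrongDual ℝ Y} (hx₀ : ‖x₀‖ = 1)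
    (hT : ‖T x₀‖ = ‖T‖) (hTx₀ : T x₀ ≠ 0) (hg : IsNormingFunctional g (T x₀)) :
    IsNormingFunctional (g.comp (apply ℝ Y x₀)) T := by
  refine .of_norm_le_one ?_ (by simpa [hT] using hg.2) fun h => hTx₀ (by simp [h])
  calc ‖g.comp (apply ℝ Y x₀)‖ ≤ ‖g‖ * ‖apply ℝ Y x₀‖ := opNorm_comp_le _ _
    _ ≤ 1 := by rw [hg.1, one_mul]; exact (norm_apply_le x₀).trans hx₀.le

theorem existsUnique_isNormingFunctional_apply (hx₀ : ‖x₀‖ = 1) {T : X →L[ℝ] Y}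
    (hT : ‖T x₀‖ = ‖T‖) (h : ∃! f : StrongDual ℝ (X →L[ℝ] Y), IsNormingFunctional f T) :
    ∃! g : StrongDual ℝ Y, IsNormingFunctional g (T x₀) := by
  have hx₀ne : x₀ ≠ 0 := norm_ne_zero_iff.mp (by rw [hx₀]; exact one_ne_zero)
  have hTx₀ : T x₀ ≠ 0 := fun h0 =>
    ne_zero_of_existsUnique_isNormingFunctional h (norm_eq_zero.mp (by rw [← hT, h0, norm_zero]))
  obtain ⟨g₀, hg₀⟩ := exists_isNormingFunctional hTx₀
  refine ⟨g₀, hg₀, fun g hg => comp_apply_injective hx₀ne ?_⟩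
  exact h.unique (hg.comp_apply hx₀ hT hTx₀) (hg₀.comp_apply hx₀ hT hTx₀)

end Evaluation

section LProjection

variable {X Y : Type*} [NormedAddCommGroup X] [NormedSpace ℝ X]
  [NormedAddCommGroup Y] [NormedSpace ℝ Y] {P : X →L[ℝ] X}

theorem sub_apply_mem_ker (hPidem : ∀ z : X, P (P z) = P z) (z : X) :
    z - P z ∈ LinearMap.ker (P : X →ₗ[ℝ] X) := by
  simp [hPidem z]

theorem norm_id_sub_le_one (hPL : ∀ z : X, ‖z‖ = ‖P z‖ + ‖z - P z‖) :
    ‖ContinuousLinearMap.id ℝ X - P‖ ≤ 1 :=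
  opNorm_le_bound _ zero_le_one fun z => by
    simp [hPL z]

theorem norm_comp_id_sub_le (hPL : ∀ z : X, ‖z‖ = ‖P z‖ + ‖z - P z‖) (S : X →L[ℝ] Y) :
    ‖S.comp (ContinuousLinearMap.id ℝ X - P)‖ ≤ ‖S‖ :=
  (opNorm_comp_le _ _).trans (mul_le_of_le_one_right (norm_nonneg S) (norm_id_sub_le_one hPL))

theorem opNorm_le_max_of_range_le_span (hPidem : ∀ z : X, P (P z) = P z)
    (hPL : ∀ z : X, ‖z‖ = ‖P z‖ + ‖z - P z‖) {x₀ : X} (hx₀ : ‖x₀‖ = 1)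
    (hP : LinearMap.range (P : X →ₗ[ℝ] X) ≤ Submodule.span ℝ {x₀}) (S : X →L[ℝ] Y) :
    ‖S‖ ≤ max ‖S x₀‖ ‖S.comp (LinearMap.ker (P : X →ₗ[ℝ] X)).subtypeL‖ := by
  set M := max ‖S x₀‖ ‖S.comp (LinearMap.ker (P : X →ₗ[ℝ] X)).subtypeL‖
  refine opNorm_le_bound _ ((norm_nonneg _).trans (le_max_left _ _)) fun z => ?_
  obtain ⟨c, hc⟩ : ∃ c : ℝ, c • x₀ = P z :=
    Submodule.mem_span_singleton.mp (hP (LinearMap.mem_range_self _ z))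
  have hrange : ‖S (P z)‖ ≤ M * ‖P z‖ := by
    rw [← hc, map_smul, norm_smul, norm_smul, hx₀, mul_one, mul_comm]
    exact mul_le_mul_of_nonneg_right (le_max_left _ _) (norm_nonneg c)
  have hker : ‖S (z - P z)‖ ≤ M * ‖z - P z‖ :=
    (S.comp (LinearMap.ker (P : X →ₗ[ℝ] X)).subtypeL).le_of_opNorm_le (le_max_right _ _)
      ⟨z - P z, sub_apply_mem_ker hPidem z⟩
  calc ‖S z‖ = ‖S (P z) + S (z - P z)‖ := by rw [← map_add, add_sub_cancel]
    _ ≤ M * ‖P z‖ + M * ‖z - P z‖ := (norm_add_le _ _).trans (add_le_add hrange hker)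
    _ = M * ‖z‖ := by rw [← mul_add, ← hPL z]

variable {x₀ : X} {T : X →L[ℝ] Y}

theorem opNorm_comp_ker_subtypeL_lt (hPidem : ∀ z : X, P (P z) = P z)
    (hPL : ∀ z : X, ‖z‖ = ‖P z‖ + ‖z - P z‖) (hx₀ : ‖x₀‖ = 1) (hPx₀ : P x₀ = x₀)
    (hT : ‖T x₀‖ = ‖T‖) (h : ∃! f : StrongDual ℝ (X →L[ℝ] Y), IsNormingFunctional f T) :
    ‖T.comp (LinearMap.ker (P : X →ₗ[ℝ] X)).subtypeL‖ < ‖T‖ := by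
  have hT0 : T ≠ 0 := ne_zero_of_existsUnique_isNormingFunctional h
  have hTx₀ : T x₀ ≠ 0 := fun h0 => hT0 (norm_eq_zero.mp (by rw [← hT, h0, norm_zero]))
  obtain ⟨g₀, hg₀⟩ := exists_isNormingFunctional hTx₀
  set Q := ContinuousLinearMap.id ℝ X - P
  by_contra! hle
  have hTQ : ‖T.comp Q‖ = ‖T‖ := by
    refine le_antisymm (norm_comp_id_sub_le hPL T) (hle.trans ?_)
    have hι : T.comp (LinearMap.ker (P : X →ₗ[ℝ] X)).subtypeL =
        (T.comp Q).comp (LinearMap.ker (P : X →ₗ[ℝ] X)).subtypeL := by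
      ext n
      simp [Q, show P n = 0 from n.2]
    rw [hι]
    exact (opNorm_comp_le _ _).trans
      (mul_le_of_le_one_right (norm_nonneg _) (Submodule.norm_subtypeL_le _))
  obtain ⟨H, hH⟩ := exists_isNormingFunctional
    (show T.comp Q ≠ 0 from norm_ne_zero_iff.mp (by rw [hTQ]; exact norm_ne_zero_iff.mpr hT0))
  set f₂ := H.comp ((compL ℝ X X Y).flip Q)
  have hf₂ : IsNormingFunctional f₂ T := by
    refine .of_norm_le_one ?_ (by simp [f₂, hH.2, hTQ]) hT0
    refine opNorm_le_bound _ zero_le_one fun S => ?_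
    calc ‖H (S.comp Q)‖ ≤ ‖H‖ * ‖S.comp Q‖ := H.le_opNorm _
      _ ≤ 1 * ‖S‖ := by rw [hH.1]; gcongr; exact norm_comp_id_sub_le hPL S
  have hPQ : P.comp Q = 0 := by
    ext z
    simp [Q, hPidem z]
  have := congr($(h.unique hf₂ (hg₀.comp_apply hx₀ hT hTx₀)) (T.comp P))
  simp only [comp_apply, flip_apply, compL_apply, comp_assoc, hPQ, comp_zero, map_zero,
    apply_apply, hPx₀, hg₀.2, f₂] at this
  exact hTx₀ (norm_eq_zero.mp this.symm)

theorem IsNormingFunctional.apply_eq_zero (hPidem : ∀ z : X, P (P z) = P z)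
    (hPL : ∀ z : X, ‖z‖ = ‖P z‖ + ‖z - P z‖) (hx₀ : ‖x₀‖ = 1)
    (hP : LinearMap.range (P : X →ₗ[ℝ] X) ≤ Submodule.span ℝ {x₀}) (hT : ‖T x₀‖ = ‖T‖)
    (hlt : ‖T.comp (LinearMap.ker (P : X →ₗ[ℝ] X)).subtypeL‖ < ‖T‖)
    {f : StrongDual ℝ (X →L[ℝ] Y)} (hf : IsNormingFunctional f T) {R : X →L[ℝ] Y}
    (hR : R x₀ = 0) : f R = 0 := by
  refine apply_eq_zero_of_isLocalMax (T := T) f ?_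
  set ι := (LinearMap.ker (P : X →ₗ[ℝ] X)).subtypeL
  have hev : ∀ᶠ t : ℝ in 𝓝 0, ‖T.comp ι‖ + |t| * ‖R‖ < ‖T‖ :=
    (show Continuous fun t : ℝ => ‖T.comp ι‖ + |t| * ‖R‖ by fun_prop).continuousAt.eventually_lt
      continuousAt_const (by simpa using hlt)
  filter_upwards [hev] with t ht
  have hker : ‖(T + t • R).comp ι‖ ≤ ‖T‖ :=
    calc ‖(T + t • R).comp ι‖ ≤ ‖T.comp ι‖ + |t| * ‖R‖ := by
          refine opNorm_le_bound _ (by positivity) fun n => ?_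
          calc ‖T n + t • R n‖ ≤ ‖T n‖ + |t| * ‖R n‖ :=
                (norm_add_le _ _).trans_eq (by rw [norm_smul, Real.norm_eq_abs])
            _ ≤ ‖T.comp ι‖ * ‖n‖ + |t| * (‖R‖ * ‖n‖) := by
                gcongr
                exacts [(T.comp ι).le_opNorm n, R.le_opNorm n]
            _ = (‖T.comp ι‖ + |t| * ‖R‖) * ‖n‖ := by ring
      _ ≤ ‖T‖ := ht.le
  calc f (T + t • R) ≤ ‖f‖ * ‖T + t • R‖ := (le_abs_self _).trans (f.le_opNorm _)
    _ ≤ ‖T‖ := by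
      rw [hf.1, one_mul]
      refine (opNorm_le_max_of_range_le_span hPidem hPL hx₀ hP _).trans (max_le ?_ hker)
      simp [hR, hT]
    _ = f (T + (0 : ℝ) • R) := by simp [hf.2]

theorem existsUnique_isNormingFunctional_of_opNorm_comp_ker_subtypeL_lt
    (hPidem : ∀ z : X, P (P z) = P z) (hPL : ∀ z : X, ‖z‖ = ‖P z‖ + ‖z - P z‖) (hx₀ : ‖x₀‖ = 1)
    (hP : LinearMap.range (P : X →ₗ[ℝ] X) ≤ Submodule.span ℝ {x₀}) (hT : ‖T x₀‖ = ‖T‖)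
    (hlt : ‖T.comp (LinearMap.ker (P : X →ₗ[ℝ] X)).subtypeL‖ < ‖T‖)
    (h : ∃! g : StrongDual ℝ Y, IsNormingFunctional g (T x₀)) :
    ∃! f : StrongDual ℝ (X →L[ℝ] Y), IsNormingFunctional f T := by
  have hTx₀ : T x₀ ≠ 0 := norm_ne_zero_iff.mp (hT ▸ ((opNorm_nonneg _).trans_lt hlt).ne')
  obtain ⟨g, hg, hguniq⟩ := h
  refine ⟨g.comp (apply ℝ Y x₀), hg.comp_apply hx₀ hT hTx₀, fun f hf => ?_⟩
  obtain ⟨g', hg', rfl⟩ := exists_eq_comp_apply hx₀ f fun R hR =>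
    hf.apply_eq_zero hPidem hPL hx₀ hP hT hlt hR
  rw [hguniq g' (.of_norm_le_one (hg'.trans hf.1.le) (hT ▸ hf.2) hTx₀)]

end LProjection

theorem smooth_iff_Lideal_general
    {X Y : Type*} [NormedAddCommGroup X] [NormedSpace ℝ X]
    [NormedAddCommGroup Y] [NormedSpace ℝ Y]
    (T : X →L[ℝ] Y) (x₀ : X) (hx₀ : ‖x₀‖ = 1)
    (hMT : {x : X | ‖x‖ = 1 ∧ ‖T x‖ = ‖T‖} = {x₀, -x₀})
    (P : X →L[ℝ] X)
    (hPidem : ∀ z : X, P (P z) = P z)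
    (hPL : ∀ z : X, ‖z‖ = ‖P z‖ + ‖z - P z‖)
    (hPrange : LinearMap.range (P : X →ₗ[ℝ] X) = Submodule.span ℝ ({x₀} : Set X)) :
    (∃! f : StrongDual ℝ (X →L[ℝ] Y), ‖f‖ = 1 ∧ f T = ‖T‖) ↔
      ((∃! g : StrongDual ℝ Y, ‖g‖ = 1 ∧ g (T x₀) = ‖T x₀‖) ∧
        ‖T.comp (LinearMap.ker (P : X →ₗ[ℝ] X)).subtypeL‖ < ‖T‖) := by
  have hT : ‖T x₀‖ = ‖T‖ := by
    have : x₀ ∈ {x : X | ‖x‖ = 1 ∧ ‖T x‖ = ‖T‖} := hMT ▸ Set.mem_insert x₀ {-x₀}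
    exact this.2
  have hPx₀ : P x₀ = x₀ := by
    obtain ⟨z, hz⟩ : x₀ ∈ LinearMap.range (P : X →ₗ[ℝ] X) :=
      hPrange ▸ Submodule.mem_span_singleton_self x₀
    rw [← hz]
    exact hPidem z
  constructor
  · intro h
    exact ⟨existsUnique_isNormingFunctional_apply hx₀ hT h,
      opNorm_comp_ker_subtypeL_lt hPidem hPL hx₀ hPx₀ hT h⟩
  · rintro ⟨h, hlt⟩
    exact existsUnique_isNormingFunctional_of_opNorm_comp_ker_subtypeL_lt hPidem hPL hx₀
      hPrange.le hT hlt h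

/-- **Theorem 10 (smoothness with an L-ideal).** Let `X, Y` be real normed spaces of
dimension ≥ 2, `T : X → Y` bounded linear with norm attainment set `{x₀, -x₀}`
(`‖x₀‖ = 1`), and let `P` be an L-projection on `X` with range `span{x₀}`. Then `T`
is a smooth point of `L(X,Y)` iff (i) `Tx₀` is a smooth point of `Y` and
(ii) `‖T|_{ker P}‖ < ‖T‖`. -/
theorem smooth_iff_Lideal
    {X Y : Type*} [NormedAddCommGroup X] [NormedSpace ℝ X]
    [NormedAddCommGroup Y] [NormedSpace ℝ Y]
    (hdimX : 2 ≤ Module.rank ℝ X) (hdimY : 2 ≤ Module.rank ℝ Y)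
    (T : X →L[ℝ] Y) (x₀ : X) (hx₀ : ‖x₀‖ = 1)
    (hMT : {x : X | ‖x‖ = 1 ∧ ‖T x‖ = ‖T‖} = {x₀, -x₀})
    (P : X →L[ℝ] X)
    (hPidem : ∀ z : X, P (P z) = P z)
    (hPL : ∀ z : X, ‖z‖ = ‖P z‖ + ‖z - P z‖)
    (hPrange : LinearMap.range (P : X →ₗ[ℝ] X) = Submodule.span ℝ ({x₀} : Set X)) :
    (∃! f : StrongDual ℝ (X →L[ℝ] Y), ‖f‖ = 1 ∧ f T = ‖T‖) ↔
      ((∃! g : StrongDual ℝ Y, ‖g‖ = 1 ∧ g (T x₀) = ‖T x₀‖) ∧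
        ‖T.comp (LinearMap.ker (P : X →ₗ[ℝ] X)).subtypeL‖ < ‖T‖) :=
  smooth_iff_Lideal_general T x₀ hx₀ hMT P hPidem hPL hPrange
end

section
/- Let X and Y be real normed linear spaces of dimension at least 2, and let T be a bounded linear operator from X to Y with nonempty norm attainment set M_T. If T is a smooth point of the space of bounded linear operators from X to Y, then (i) M_T = {x₀, −x₀} for some x₀ ∈ X with ‖x₀‖ = 1, (ii) Tx₀ is a smooth point of Y, and (iii) dist(T, K(X,Y)) < ‖T‖. -/
/-!
A supporting functional `g` of `T x`, for `x` in the norm attainment set, yields the supporting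
functional `S ↦ g (S x)` of `T` in `L(X, Y)`; smoothness of `T` makes all of these coincide.
Testing this on rank-one operators `φ.smulRight y` gives `φ x * g y = φ x' * g' y`, which
pins down `x` up to sign and `g` uniquely. If `T` were at distance `‖T‖` from the compact
operators, Hahn–Banach would give a supporting functional of `T` vanishing on them, in
particular on the rank-one operator `φ.smulRight (T x)`, on which the evaluation functional
takes the value `‖T‖`.
-/

open Metric

section SmoothPoint

variable {E : Type*} [SeminormedAddCommGroup E] [NormedSpace ℝ E]

def IsSmoothPoint (z : E) : Prop :=
  ∃! f : StrongDual ℝ E, ‖f‖ = 1 ∧ f z = ‖z‖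

theorem norm_eq_one_of_norm_le_one_of_apply_eq {z : E} (hz : 0 < ‖z‖) {g : StrongDual ℝ E}
    (hg : ‖g‖ ≤ 1) (hgz : g z = ‖z‖) : ‖g‖ = 1 := by
  refine le_antisymm hg (le_of_mul_le_mul_right ?_ hz)
  calc 1 * ‖z‖ = ‖g z‖ := by rw [one_mul, hgz, Real.norm_of_nonneg (norm_nonneg z)]
    _ ≤ ‖g‖ * ‖z‖ := g.le_opNorm z

theorem IsSmoothPoint.norm_pos {z : E} (hz : IsSmoothPoint z) : 0 < ‖z‖ := by
  obtain ⟨f, ⟨hf, hfz⟩, huniq⟩ := hz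
  refine (norm_nonneg z).lt_of_ne fun hz0 => ?_
  have hneg : -f = f := huniq (-f) ⟨by rw [norm_neg, hf], by simp [hfz, ← hz0]⟩
  have hf0 : f = 0 := by
    ext w
    have := congrArg (· w) hneg
    simp only [neg_apply] at this
    simp only [zero_apply]
    linarith
  simp [hf0] at hf

theorem IsSmoothPoint.eq_of_norm_le_one {z : E} (hz : IsSmoothPoint z) {f g : StrongDual ℝ E}
    (hf : ‖f‖ ≤ 1) (hfz : f z = ‖z‖) (hg : ‖g‖ ≤ 1) (hgz : g z = ‖z‖) : f = g := by
  have hpos := hz.norm_pos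
  obtain ⟨_, _, huniq⟩ := hz
  rw [huniq f ⟨norm_eq_one_of_norm_le_one_of_apply_eq hpos hf hfz, hfz⟩,
    huniq g ⟨norm_eq_one_of_norm_le_one_of_apply_eq hpos hg hgz, hgz⟩]

end SmoothPoint

theorem Submodule.exists_dual_apply_eq_infDist {E : Type*} [SeminormedAddCommGroup E]
    [NormedSpace ℝ E] (p : Submodule ℝ E) (z : E) :
    ∃ F : StrongDual ℝ E, ‖F‖ ≤ 1 ∧ F z = infDist z p ∧ ∀ w ∈ p, F w = 0 := by
  obtain ⟨ψ, hψ, hψz⟩ := exists_dual_vector'' ℝ (Submodule.Quotient.mk z : E ⧸ p)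
  have hbound : ∀ w : E, ‖ψ (p.mkQ w)‖ ≤ 1 * ‖w‖ := fun w =>
    calc ‖ψ (p.mkQ w)‖ ≤ ‖ψ‖ * ‖(Submodule.Quotient.mk w : E ⧸ p)‖ := ψ.le_opNorm _
      _ ≤ 1 * ‖w‖ := mul_le_mul hψ (Submodule.Quotient.norm_mk_le p w) (norm_nonneg _) zero_le_one
  refine ⟨(ψ.toLinearMap.comp p.mkQ).mkContinuous 1 hbound,
    LinearMap.mkContinuous_norm_le _ zero_le_one _, ?_, fun w hw => ?_⟩
  · exact hψz.trans (QuotientAddGroup.norm_mk z)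
  · simp [(Submodule.Quotient.mk_eq_zero p).mpr hw]

theorem eq_or_eq_neg_of_forall_dual_mul_eq {E : Type*} [NormedAddCommGroup E] [NormedSpace ℝ E]
    {x z : E} (hx : ‖x‖ = 1) (hz : ‖z‖ = 1) {a b : ℝ} (ha : a ≠ 0)
    (h : ∀ φ : StrongDual ℝ E, φ z * a = φ x * b) : z = x ∨ z = -x := by
  have hzx : z = (b / a) • x := (SeparatingDual.eq_iff_forall_dual_eq (R := ℝ)).mpr fun φ => by
    rw [map_smul, smul_eq_mul, div_mul_eq_mul_div, eq_div_iff ha, h, mul_comm b]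
  have hc : |b / a| = 1 := by
    rw [abs_div]
    simpa [hx, hz, norm_smul] using (congrArg norm hzx).symm
  rcases abs_eq zero_le_one |>.mp hc with hc | hc
  · left; rw [hzx, hc, one_smul]
  · right; rw [hzx, hc, neg_one_smul]

section Operators

variable {X Y : Type*} [NormedAddCommGroup X] [NormedSpace ℝ X]
  [NormedAddCommGroup Y] [NormedSpace ℝ Y]

def normAttainSet (T : X →L[ℝ] Y) : Set X :=
  {x | ‖x‖ = 1 ∧ ‖T x‖ = ‖T‖}

theorem neg_mem_normAttainSet {T : X →L[ℝ] Y} {x : X} (hx : x ∈ normAttainSet T) :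
    -x ∈ normAttainSet T := by
  simpa [normAttainSet] using hx

theorem ContinuousLinearMap.isCompactOperator_smulRight (φ : StrongDual ℝ X) (y : Y) :
    IsCompactOperator (φ.smulRight y) :=
  (isCompactOperator_of_locallyCompactSpace_dom φ).clm_comp (toSpanSingleton ℝ y)

theorem norm_comp_apply_le_one {g : StrongDual ℝ Y} (hg : ‖g‖ ≤ 1) {x : X} (hx : ‖x‖ ≤ 1) :
    ‖g.comp (ContinuousLinearMap.apply ℝ Y x)‖ ≤ 1 := by
  refine ContinuousLinearMap.opNorm_le_bound _ zero_le_one fun S => ?_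
  calc ‖g (S x)‖ ≤ ‖g‖ * (‖S‖ * ‖x‖) := g.le_opNorm_of_le (S.le_opNorm x)
    _ ≤ 1 * (‖S‖ * 1) := by gcongr
    _ = 1 * ‖S‖ := by rw [mul_one]

variable {T : X →L[ℝ] Y}

theorem IsSmoothPoint.comp_apply_eq_comp_apply (hT : IsSmoothPoint T) {x x' : X}
    (hx : x ∈ normAttainSet T) (hx' : x' ∈ normAttainSet T) {g g' : StrongDual ℝ Y}
    (hg : ‖g‖ ≤ 1) (hgx : g (T x) = ‖T‖) (hg' : ‖g'‖ ≤ 1) (hgx' : g' (T x') = ‖T‖) :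
    g.comp (ContinuousLinearMap.apply ℝ Y x) = g'.comp (ContinuousLinearMap.apply ℝ Y x') :=
  hT.eq_of_norm_le_one (norm_comp_apply_le_one hg hx.1.le) hgx
    (norm_comp_apply_le_one hg' hx'.1.le) hgx'

theorem IsSmoothPoint.mul_apply_eq_mul_apply (hT : IsSmoothPoint T) {x x' : X}
    (hx : x ∈ normAttainSet T) (hx' : x' ∈ normAttainSet T) {g g' : StrongDual ℝ Y}
    (hg : ‖g‖ ≤ 1) (hgx : g (T x) = ‖T‖) (hg' : ‖g'‖ ≤ 1) (hgx' : g' (T x') = ‖T‖)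
    (φ : StrongDual ℝ X) (y : Y) : φ x * g y = φ x' * g' y := by
  simpa using congrArg (· (φ.smulRight y))
    (hT.comp_apply_eq_comp_apply hx hx' hg hgx hg' hgx')

theorem exists_dual_apply_eq_opNorm {x : X} (hx : x ∈ normAttainSet T) :
    ∃ g : StrongDual ℝ Y, ‖g‖ ≤ 1 ∧ g (T x) = ‖T‖ := by
  obtain ⟨g, hg, hgx⟩ := exists_dual_vector'' ℝ (T x)
  exact ⟨g, hg, hgx.trans hx.2⟩

theorem IsSmoothPoint.normAttainSet_eq (hT : IsSmoothPoint T) {x₀ : X}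
    (hx₀ : x₀ ∈ normAttainSet T) : normAttainSet T = {x₀, -x₀} := by
  ext z
  refine ⟨fun hz => ?_, ?_⟩
  · obtain ⟨g₀, hg₀, hg₀x₀⟩ := exists_dual_apply_eq_opNorm hx₀
    obtain ⟨g, hg, hgz⟩ := exists_dual_apply_eq_opNorm hz
    refine eq_or_eq_neg_of_forall_dual_mul_eq hx₀.1 hz.1 (b := g₀ (T z)) hT.norm_pos.ne'
      fun φ => ?_
    rw [← hgz]
    exact hT.mul_apply_eq_mul_apply hz hx₀ hg hgz hg₀ hg₀x₀ φ (T z)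
  · rintro (rfl | rfl)
    · exact hx₀
    · exact neg_mem_normAttainSet hx₀

theorem IsSmoothPoint.isSmoothPoint_apply (hT : IsSmoothPoint T) {x₀ : X}
    (hx₀ : x₀ ∈ normAttainSet T) : IsSmoothPoint (T x₀) := by
  obtain ⟨g₀, hg₀, hg₀x₀⟩ := exists_dual_vector ℝ (T x₀) (hx₀.2 ▸ hT.norm_pos).ne'
  obtain ⟨φ, -, hφx₀⟩ := exists_dual_vector'' ℝ x₀
  refine ⟨g₀, ⟨hg₀, hg₀x₀⟩, fun g ⟨hg, hgx₀⟩ => ContinuousLinearMap.ext fun y => ?_⟩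
  have hy := hT.mul_apply_eq_mul_apply hx₀ hx₀ hg.le (hgx₀.trans hx₀.2)
    hg₀.le (hg₀x₀.trans hx₀.2) φ y
  simpa [hφx₀, hx₀.1] using hy

theorem IsSmoothPoint.infDist_compactOperator_lt (hT : IsSmoothPoint T) {x₀ : X}
    (hx₀ : x₀ ∈ normAttainSet T) :
    infDist T {K : X →L[ℝ] Y | IsCompactOperator ⇑K} < ‖T‖ := by
  have hle : infDist T {K : X →L[ℝ] Y | IsCompactOperator ⇑K} ≤ ‖T‖ :=
    (infDist_le_dist_of_mem (x := T) (y := 0) isCompactOperator_zero).trans_eq (dist_zero_right T)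
  refine hle.lt_of_ne fun hdist => ?_
  obtain ⟨F, hF, hFT, hFK⟩ := (compactOperator (RingHom.id ℝ) X Y).exists_dual_apply_eq_infDist T
  obtain ⟨g₀, hg₀, hg₀x₀⟩ := exists_dual_apply_eq_opNorm hx₀
  obtain ⟨φ, -, hφx₀⟩ := exists_dual_vector'' ℝ x₀
  have hFg : F = g₀.comp (ContinuousLinearMap.apply ℝ Y x₀) :=
    hT.eq_of_norm_le_one hF (hFT.trans hdist) (norm_comp_apply_le_one hg₀ hx₀.1.le) hg₀x₀
  have hFS : F (φ.smulRight (T x₀)) = ‖T‖ := by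
    simp [hFg, hφx₀, hx₀.1, hg₀x₀]
  rw [hFK _ (φ.isCompactOperator_smulRight (T x₀))] at hFS
  exact hT.norm_pos.ne hFS

end Operators

theorem smooth_necessary_conditions_general
    {X Y : Type*} [NormedAddCommGroup X] [NormedSpace ℝ X]
    [NormedAddCommGroup Y] [NormedSpace ℝ Y]
    (T : X →L[ℝ] Y)
    (hMT : {x : X | ‖x‖ = 1 ∧ ‖T x‖ = ‖T‖}.Nonempty)
    (hsmooth : ∃! f : StrongDual ℝ (X →L[ℝ] Y), ‖f‖ = 1 ∧ f T = ‖T‖) :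
    ∃ x₀ : X, ‖x₀‖ = 1 ∧
      {x : X | ‖x‖ = 1 ∧ ‖T x‖ = ‖T‖} = {x₀, -x₀} ∧
      (∃! g : StrongDual ℝ Y, ‖g‖ = 1 ∧ g (T x₀) = ‖T x₀‖) ∧
      Metric.infDist T {K : X →L[ℝ] Y | IsCompactOperator ⇑K} < ‖T‖ := by
  obtain ⟨x₀, hx₀⟩ := hMT
  have hT : IsSmoothPoint T := hsmooth
  exact ⟨x₀, hx₀.1, hT.normAttainSet_eq hx₀, hT.isSmoothPoint_apply hx₀,
    hT.infDist_compactOperator_lt hx₀⟩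

/-- **Theorem 11 (necessary conditions for smoothness).** Let `X, Y` be real normed
spaces of dimension ≥ 2 and `T : X → Y` bounded linear with nonempty norm attainment
set. If `T` is a smooth point of `L(X,Y)`, then (i) `M_T = {x₀, -x₀}` for some unit
vector `x₀`, (ii) `Tx₀` is a smooth point of `Y`, and (iii) `dist(T, K(X,Y)) < ‖T‖`. -/
theorem smooth_necessary_conditions
    {X Y : Type*} [NormedAddCommGroup X] [NormedSpace ℝ X]
    [NormedAddCommGroup Y] [NormedSpace ℝ Y]
    (hdimX : 2 ≤ Module.rank ℝ X) (hdimY : 2 ≤ Module.rank ℝ Y)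
    (T : X →L[ℝ] Y)
    (hMT : {x : X | ‖x‖ = 1 ∧ ‖T x‖ = ‖T‖}.Nonempty)
    (hsmooth : ∃! f : StrongDual ℝ (X →L[ℝ] Y), ‖f‖ = 1 ∧ f T = ‖T‖) :
    ∃ x₀ : X, ‖x₀‖ = 1 ∧
      {x : X | ‖x‖ = 1 ∧ ‖T x‖ = ‖T‖} = {x₀, -x₀} ∧
      (∃! g : StrongDual ℝ Y, ‖g‖ = 1 ∧ g (T x₀) = ‖T x₀‖) ∧
      Metric.infDist T {K : X →L[ℝ] Y | IsCompactOperator ⇑K} < ‖T‖ :=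
  smooth_necessary_conditions_general T hMT hsmooth
end
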